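/- arXiv:cs/0302011 — 7 statements merged into one kernel-verified Lean document; each statement's English description precedes it below -/
import Mathlib

section
/- Let C₀ ⊆ R^d be a non-pointed convex cone (a convex set closed under positive scaling such that there exists t with ⟨t, x⟩ < 0 for all x ∈ C₀), and let a ∈ R^d be such that C₀ ∩ pos(a) is nonempty. Then the distance to ill-posedness ρ(a, C₀) equals the maximum over unit vectors p ∈ C₀ ∩ pos(a) of ⟨a, p⟩. -/
/-- pos(a) = {x : ⟨a,x⟩ ≥ 0}. -/
def posSet {d : ℕ} (a : EuclideanSpace ℝ (Fin d)) : Set (EuclideanSpace ℝ (Fin d)) :=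
  {x | (0 : ℝ) ≤ inner ℝ a x}

/-- Distance to ill-posedness in the feasible case:
ρ(a, C) = sup{ε : ‖Δa‖ < ε implies C ∩ pos(a+Δa) is nonempty}. -/
noncomputable def rhoFeas {d : ℕ} (a : EuclideanSpace ℝ (Fin d))
    (C : Set (EuclideanSpace ℝ (Fin d))) : ℝ :=
  sSup {ε : ℝ | ∀ Δa : EuclideanSpace ℝ (Fin d), ‖Δa‖ < ε →
    (C ∩ posSet (a + Δa)).Nonempty}

/-- Lemma (Quite feasible region implies quite feasible point, single constraint):
for a non-pointed convex cone C₀ with C₀ ∩ pos(a) nonempty,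
ρ(a, C₀) equals the maximum of ⟨a,p⟩ over unit vectors p ∈ C₀ ∩ pos(a). -/
theorem rho_eq_max_inner {d : ℕ} (C₀ : Set (EuclideanSpace ℝ (Fin d)))
    (hconv : Convex ℝ C₀)
    (hcone : ∀ x ∈ C₀, ∀ α : ℝ, 0 < α → α • x ∈ C₀)
    (hnp : ∃ t : EuclideanSpace ℝ (Fin d), ∀ x ∈ C₀, (inner ℝ t x : ℝ) < 0)
    (a : EuclideanSpace ℝ (Fin d)) (hfeas : (C₀ ∩ posSet a).Nonempty) :
    rhoFeas a C₀ = sSup {r : ℝ | ∃ p ∈ C₀ ∩ posSet a, ‖p‖ = 1 ∧ r = (inner ℝ a p : ℝ)} := by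
  obtain ⟨t, ht⟩ := hnp
  set Mset := {r : ℝ | ∃ p ∈ C₀ ∩ posSet a, ‖p‖ = 1 ∧ r = (inner ℝ a p : ℝ)} with hMsetdef
  set M := sSup Mset with hMdef
  obtain ⟨x₀, hx₀C, hx₀pos⟩ := hfeas
  have hx₀ne : x₀ ≠ 0 := by
    intro h
    have := ht x₀ hx₀C
    rw [h, inner_zero_right] at this
    exact absurd this (lt_irrefl 0)
  have hnx₀ : (0:ℝ) < ‖x₀‖ := norm_pos_iff.mpr hx₀ne
  have hMbdd : BddAbove Mset := by
    refine ⟨‖a‖, ?_⟩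
    rintro r ⟨p, ⟨hpC, hppos⟩, hpn, rfl⟩
    calc (inner ℝ a p : ℝ) ≤ ‖a‖ * ‖p‖ := real_inner_le_norm a p
    _ = ‖a‖ := by rw [hpn, mul_one]
  set p₀ : EuclideanSpace ℝ (Fin d) := ‖x₀‖⁻¹ • x₀ with hp₀def
  have hp₀C : p₀ ∈ C₀ := hcone x₀ hx₀C _ (inv_pos.mpr hnx₀)
  have hp₀inner : (inner ℝ a p₀ : ℝ) = ‖x₀‖⁻¹ * (inner ℝ a x₀ : ℝ) :=
    real_inner_smul_right a x₀ _
  have hx₀pos' : (0:ℝ) ≤ inner ℝ a x₀ := hx₀pos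
  have hp₀pos : p₀ ∈ posSet a := by
    simp only [posSet, Set.mem_setOf_eq, hp₀inner]
    positivity
  have hp₀n : ‖p₀‖ = 1 := by
    rw [hp₀def, norm_smul, norm_inv, norm_norm, inv_mul_cancel₀ (ne_of_gt hnx₀)]
  have hp₀mem : (inner ℝ a p₀ : ℝ) ∈ Mset := ⟨p₀, ⟨hp₀C, hp₀pos⟩, hp₀n, rfl⟩
  have hp₀nonneg : (0:ℝ) ≤ inner ℝ a p₀ := hp₀pos
  have hM0 : 0 ≤ M := le_trans hp₀nonneg (le_csSup hMbdd hp₀mem)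
  -- every point of C₀ obeys ⟨a,x⟩ ≤ M‖x‖
  have hboundC : ∀ x ∈ C₀, (inner ℝ a x : ℝ) ≤ M * ‖x‖ := by
    intro x hxC
    rcases le_or_gt (inner ℝ a x : ℝ) 0 with h | h
    · exact le_trans h (by positivity)
    · have hxne : x ≠ 0 := by
        intro h0; rw [h0, inner_zero_right] at h; exact absurd h (lt_irrefl 0)
      have hnx : (0:ℝ) < ‖x‖ := norm_pos_iff.mpr hxne
      set p : EuclideanSpace ℝ (Fin d) := ‖x‖⁻¹ • x with hpdef
      have hpC : p ∈ C₀ := hcone x hxC _ (inv_pos.mpr hnx)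
      have hpinner : (inner ℝ a p : ℝ) = ‖x‖⁻¹ * (inner ℝ a x : ℝ) :=
        real_inner_smul_right a x _
      have hppos : p ∈ posSet a := by
        simp only [posSet, Set.mem_setOf_eq, hpinner]
        positivity
      have hpn : ‖p‖ = 1 := by
        rw [hpdef, norm_smul, norm_inv, norm_norm, inv_mul_cancel₀ (ne_of_gt hnx)]
      have hle : (inner ℝ a p : ℝ) ≤ M := le_csSup hMbdd ⟨p, ⟨hpC, hppos⟩, hpn, rfl⟩
      rw [hpinner] at hle
      calc (inner ℝ a x : ℝ) = ‖x‖ * (‖x‖⁻¹ * (inner ℝ a x : ℝ)) := by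
            field_simp
      _ ≤ ‖x‖ * M := by
            apply mul_le_mul_of_nonneg_left hle (le_of_lt hnx)
      _ = M * ‖x‖ := mul_comm _ _
  -- the closed conic hull
  set K : Set (EuclideanSpace ℝ (Fin d)) := closure (C₀ ∪ {0}) with hKdef
  have h0mem : (0 : EuclideanSpace ℝ (Fin d)) ∈ C₀ ∪ {0} := Or.inr rfl
  have hconv0 : Convex ℝ (C₀ ∪ {0}) := by
    intro x hx y hy α β hα hβ hαβ
    rcases hx with hx | hx
    · rcases hy with hy | hy
      · exact Or.inl (hconv hx hy hα hβ hαβ)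
      · rw [Set.mem_singleton_iff] at hy
        subst hy
        rcases eq_or_lt_of_le hα with h | h
        · right; rw [← h, zero_smul, smul_zero, add_zero]; rfl
        · rw [smul_zero, add_zero]
          exact Or.inl (hcone x hx α h)
    · rw [Set.mem_singleton_iff] at hx
      subst hx
      rcases hy with hy | hy
      · rcases eq_or_lt_of_le hβ with h | h
        · right; rw [← h, zero_smul, smul_zero, zero_add]; rfl
        · rw [smul_zero, zero_add]
          exact Or.inl (hcone y hy β h)
      · rw [Set.mem_singleton_iff] at hy
        subst hy
        rw [smul_zero, smul_zero, add_zero]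
        exact Or.inr rfl
  have hscale0 : ∀ α : ℝ, 0 < α → ∀ x ∈ C₀ ∪ {0}, α • x ∈ C₀ ∪ {0} := by
    intro α hα x hx
    rcases hx with hx | hx
    · exact Or.inl (hcone x hx α hα)
    · rw [Set.mem_singleton_iff] at hx; subst hx
      rw [smul_zero]; exact Or.inr rfl
  have hscale : ∀ α : ℝ, 0 ≤ α → ∀ x ∈ K, α • x ∈ K := by
    intro α hα x hx
    rcases eq_or_lt_of_le hα with h | h
    · rw [← h, zero_smul]; exact subset_closure h0mem
    · have h1 : α • x ∈ (fun y => α • y) '' closure (C₀ ∪ {0}) := ⟨x, hx, rfl⟩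
      have h2 : (fun y => α • y) '' closure (C₀ ∪ {0}) ⊆
          closure ((fun y => α • y) '' (C₀ ∪ {0})) :=
        image_closure_subset_closure_image (continuous_const_smul α)
      have h3 : (fun y : EuclideanSpace ℝ (Fin d) => α • y) '' (C₀ ∪ {0}) ⊆ C₀ ∪ {0} := by
        rintro _ ⟨y, hy, rfl⟩
        exact hscale0 α h y hy
      exact closure_mono h3 (h2 h1)
  have hboundK : ∀ x ∈ K, (inner ℝ a x : ℝ) ≤ M * ‖x‖ := by
    have hsub : K ⊆ {x : EuclideanSpace ℝ (Fin d) | (inner ℝ a x : ℝ) ≤ M * ‖x‖} := by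
      apply closure_minimal
      · rintro x (hx | hx)
        · exact hboundC x hx
        · rw [Set.mem_singleton_iff] at hx; subst hx
          simp
      · exact isClosed_le (Continuous.inner continuous_const continuous_id)
          (continuous_const.mul continuous_norm)
    exact fun x hx => hsub hx
  have htK : ∀ x ∈ K, (inner ℝ t x : ℝ) ≤ 0 := by
    have hsub : K ⊆ {x : EuclideanSpace ℝ (Fin d) | (inner ℝ t x : ℝ) ≤ 0} := by
      apply closure_minimal
      · rintro x (hx | hx)
        · exact le_of_lt (ht x hx)
        · rw [Set.mem_singleton_iff] at hx; subst hx
          simp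
      · exact isClosed_le (Continuous.inner continuous_const continuous_id) continuous_const
    exact fun x hx => hsub hx
  -- projection of a onto K
  have hKne : K.Nonempty := ⟨0, subset_closure h0mem⟩
  have hKconv : Convex ℝ K := hconv0.closure
  have hKcomplete : IsComplete K := isClosed_closure.isComplete
  obtain ⟨v, hvK, hvproj⟩ := exists_norm_eq_iInf_of_complete_convex hKne hKcomplete hKconv a
  have hvar : ∀ w ∈ K, (inner ℝ (a - v) (w - v) : ℝ) ≤ 0 :=
    (norm_eq_iInf_iff_real_inner_le_zero hKconv hvK).mp hvproj
  have hvv : (inner ℝ (a - v) v : ℝ) = 0 := by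
    have h1 : (inner ℝ (a - v) v : ℝ) ≤ 0 := by
      have h2v : ((2:ℝ) • v) ∈ K := hscale 2 (by norm_num) v hvK
      have := hvar _ h2v
      have he : (2:ℝ) • v - v = v := by module
      rwa [he] at this
    have h2 : 0 ≤ (inner ℝ (a - v) v : ℝ) := by
      have hhv : (((1:ℝ)/2) • v) ∈ K := hscale _ (by norm_num) v hvK
      have := hvar _ hhv
      have he : ((1:ℝ)/2) • v - v = (-(1/2) : ℝ) • v := by module
      rw [he, real_inner_smul_right] at this
      linarith
    linarith
  have hpolar : ∀ w ∈ K, (inner ℝ (a - v) w : ℝ) ≤ 0 := by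
    intro w hw
    have := hvar w hw
    rw [inner_sub_right] at this
    linarith [hvv]
  have hav : (inner ℝ a v : ℝ) = ‖v‖ ^ 2 := by
    have h := hvv
    rw [inner_sub_left] at h
    have : (inner ℝ a v : ℝ) = inner ℝ v v := by linarith
    rw [this, real_inner_self_eq_norm_sq]
  have hvM : ‖v‖ ≤ M := by
    rcases eq_or_ne v 0 with h | h
    · rw [h, norm_zero]; exact hM0
    · have h1 : ‖v‖ ^ 2 ≤ M * ‖v‖ := hav ▸ hboundK v hvK
      have h2 : 0 < ‖v‖ := norm_pos_iff.mpr h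
      nlinarith
  -- key upper bound: every ε in the rho set is ≤ M
  have hkey : ∀ ε ∈ {ε : ℝ | ∀ Δa : EuclideanSpace ℝ (Fin d), ‖Δa‖ < ε →
      (C₀ ∩ posSet (a + Δa)).Nonempty}, ε ≤ M := by
    intro ε hε
    by_contra hlt
    push_neg at hlt
    set lam := (ε - M) / (2 * (‖t‖ + 1)) with hlamdef
    have ht1 : (0:ℝ) < ‖t‖ + 1 := by positivity
    have hlam : 0 < lam := by
      apply div_pos (by linarith) (by linarith)
    set Δa : EuclideanSpace ℝ (Fin d) := lam • t - v with hΔdef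
    have hlamt : lam * ‖t‖ < ε - M := by
      have h1 : lam * (‖t‖ + 1) = (ε - M) / 2 := by
        rw [hlamdef]; field_simp
      nlinarith [norm_nonneg t]
    have hnorm : ‖Δa‖ < ε := by
      calc ‖Δa‖ ≤ ‖lam • t‖ + ‖v‖ := norm_sub_le _ _
      _ = lam * ‖t‖ + ‖v‖ := by rw [norm_smul, Real.norm_of_nonneg (le_of_lt hlam)]
      _ ≤ lam * ‖t‖ + M := by linarith
      _ < ε := by linarith
    obtain ⟨x, hxC, hxpos⟩ := hε Δa hnorm
    have hxpos' : (0:ℝ) ≤ inner ℝ (a + Δa) x := hxpos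
    have hA : (inner ℝ (a - v) x : ℝ) ≤ 0 := hpolar x (subset_closure (Or.inl hxC))
    have hB : (inner ℝ t x : ℝ) < 0 := ht x hxC
    have hsplit : (inner ℝ (a + Δa) x : ℝ) = (inner ℝ (a - v) x : ℝ) + lam * (inner ℝ t x : ℝ) := by
      rw [hΔdef]
      rw [inner_add_left, inner_sub_left, inner_sub_left, real_inner_smul_left]
      ring
    nlinarith
  -- conclusion
  rw [rhoFeas]
  apply le_antisymm
  · exact Real.sSup_le hkey hM0
  · apply csSup_le_csSup ⟨M, hkey⟩ ⟨_, hp₀mem⟩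
    rintro r ⟨p, ⟨hpC, hppos⟩, hpn, rfl⟩
    intro Δa hΔ
    refine ⟨p, hpC, ?_⟩
    have h1 : |(inner ℝ Δa p : ℝ)| ≤ ‖Δa‖ * ‖p‖ := abs_real_inner_le_norm Δa p
    rw [hpn, mul_one] at h1
    have h2 : -(inner ℝ Δa p : ℝ) ≤ ‖Δa‖ := le_trans (neg_le_abs _) h1
    show (0:ℝ) ≤ inner ℝ (a + Δa) p
    rw [inner_add_left]
    linarith
end

section
/- Let C be a non-pointed convex cone in R^d and a₁,...,aₙ ∈ R^d be such that C ∩ ⋂ᵢ pos(aᵢ) is nonempty. Then ρ([a₁,...,aₙ], C) ≥ max over unit vectors p ∈ C ∩ ⋂ᵢ pos(aᵢ) of minᵢ ⟨aᵢ, p⟩, where ρ([a₁,...,aₙ], C) is the supremum of ε such that every perturbation of the matrix with rows aᵢ of Frobenius norm less than ε leaves the system feasible. -/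
/-- Distance to ill-posedness of the system with rows a₁,...,aₙ over cone C,
feasible case: sup of ε such that every perturbation of the rows of Frobenius norm
less than ε leaves the system feasible. -/
noncomputable def rhoFeasM {d n : ℕ} (a : Fin n → EuclideanSpace ℝ (Fin d))
    (C : Set (EuclideanSpace ℝ (Fin d))) : ℝ :=
  sSup {ε : ℝ | ∀ Δ : Fin n → EuclideanSpace ℝ (Fin d),
    Real.sqrt (∑ i, ‖Δ i‖ ^ 2) < ε →
    (C ∩ ⋂ i, posSet (a i + Δ i)).Nonempty}

/-- Lemma (Bounding ρ by a max of min of inner ℝ products):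
ρ([a₁,...,aₙ], C) ≥ min_i ⟨aᵢ,p⟩ for every unit vector p ∈ C ∩ ⋂ᵢ pos(aᵢ). -/
theorem rho_ge_max_min_inner {d n : ℕ} (C : Set (EuclideanSpace ℝ (Fin d)))
    (hconv : Convex ℝ C)
    (hcone : ∀ x ∈ C, ∀ α : ℝ, 0 < α → α • x ∈ C)
    (hnp : ∃ t : EuclideanSpace ℝ (Fin d), ∀ x ∈ C, (inner ℝ t x : ℝ) < 0)
    (a : Fin n → EuclideanSpace ℝ (Fin d))
    (hfeas : (C ∩ ⋂ i, posSet (a i)).Nonempty) :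
    ∀ p ∈ C ∩ ⋂ i, posSet (a i), ‖p‖ = 1 →
      (⨅ i, (inner ℝ (a i) p : ℝ)) ≤ rhoFeasM a C := by
  intro p hp hpnorm
  rcases Nat.eq_zero_or_pos n with hn | hn
  · subst hn
    have h1 : (⨅ i : Fin 0, (inner ℝ (a i) p : ℝ)) = 0 := by
      rw [iInf, Set.range_eq_empty, Real.sInf_empty]
    have h2 : rhoFeasM a C = 0 := by
      have hs : {ε : ℝ | ∀ Δ : Fin 0 → EuclideanSpace ℝ (Fin d),
          Real.sqrt (∑ i, ‖Δ i‖ ^ 2) < ε →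
          (C ∩ ⋂ i, posSet (a i + Δ i)).Nonempty} = Set.univ := by
        ext ε
        simp only [Set.mem_setOf_eq, Set.mem_univ, iff_true]
        intro Δ _
        obtain ⟨x, hx, _⟩ := hfeas
        exact ⟨x, hx, by simp⟩
      rw [rhoFeasM, hs, Real.sSup_univ]
    rw [h1, h2]
  · obtain ⟨t, ht⟩ := hnp
    set S := {ε : ℝ | ∀ Δ : Fin n → EuclideanSpace ℝ (Fin d),
      Real.sqrt (∑ i, ‖Δ i‖ ^ 2) < ε →
      (C ∩ ⋂ i, posSet (a i + Δ i)).Nonempty} with hS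
    have hbdd : BddAbove S := by
      refine ⟨Real.sqrt (∑ i, ‖t - a i‖ ^ 2), fun ε hε => ?_⟩
      by_contra h
      push_neg at h
      obtain ⟨x, hxC, hxI⟩ := hε (fun i => t - a i) h
      have hkey : (0:ℝ) ≤ inner ℝ t x := by
        have := Set.mem_iInter.1 hxI ⟨0, hn⟩
        have heq : a ⟨0, hn⟩ + (t - a ⟨0, hn⟩) = t := by abel
        rw [heq] at this
        exact this
      exact absurd hkey (not_le.2 (ht x hxC))
    have hmem : (⨅ i, (inner ℝ (a i) p : ℝ)) ∈ S := by
      intro Δ hΔ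
      refine ⟨p, hp.1, Set.mem_iInter.2 fun i => ?_⟩
      show (0:ℝ) ≤ inner ℝ (a i + Δ i) p
      rw [inner_add_left]
      haveI : Nonempty (Fin n) := ⟨⟨0, hn⟩⟩
      have h1 : (⨅ j, (inner ℝ (a j) p : ℝ)) ≤ inner ℝ (a i) p :=
        ciInf_le (Set.Finite.bddBelow (Set.finite_range _)) i
      have h2 : ‖Δ i‖ ≤ Real.sqrt (∑ j, ‖Δ j‖ ^ 2) := by
        rw [show ‖Δ i‖ = Real.sqrt (‖Δ i‖ ^ 2) from (Real.sqrt_sq (norm_nonneg _)).symm]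
        exact Real.sqrt_le_sqrt
          (Finset.single_le_sum (fun j _ => sq_nonneg ‖Δ j‖) (Finset.mem_univ i))
      have h3 : |(inner ℝ (Δ i) p : ℝ)| ≤ ‖Δ i‖ * ‖p‖ := abs_real_inner_le_norm (Δ i) p
      rw [hpnorm, mul_one] at h3
      have h4 := abs_le.1 h3
      linarith [h4.1]
    exact le_csSup hbdd hmem
end

section
/- Let C be a non-pointed convex cone in R^d and a₁,...,aₙ ∈ R^d with C ∩ ⋂ᵢ pos(aᵢ) nonempty. Then max over unit vectors p ∈ C ∩ ⋂ᵢ pos(aᵢ) of minᵢ ⟨aᵢ, p⟩ is at least (1/d) · minᵢ ρ(aᵢ, C ∩ ⋂_{j≠i} pos(aⱼ)). -/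
open Set Metric RealInnerProductSpace
set_option maxHeartbeats 2000000

section Aux

variable {E : Type*} [NormedAddCommGroup E] [InnerProductSpace ℝ E]

/-- Projection onto a closed convex cone. -/
lemma coneProj [CompleteSpace E] {K : Set E} (h0 : (0 : E) ∈ K) (hconv : Convex ℝ K)
    (hcl : IsClosed K) (hsc : ∀ x ∈ K, ∀ α : ℝ, 0 ≤ α → α • x ∈ K) (b : E) :
    ∃ u ∈ K, (∀ w ∈ K, ⟪b - u, w⟫ ≤ 0) ∧ ⟪b - u, u⟫ = 0 := by
  obtain ⟨u, huK, hu⟩ := exists_norm_eq_iInf_of_complete_convex ⟨0, h0⟩ hcl.isComplete hconv b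
  rw [norm_eq_iInf_iff_real_inner_le_zero hconv huK] at hu
  have h2u : ((2 : ℝ) • u) - u = u := by rw [two_smul]; abel
  have h1 : ⟪b - u, u⟫ ≤ 0 := by
    have := hu ((2 : ℝ) • u) (hsc u huK 2 (by norm_num))
    rwa [h2u] at this
  have h2 : 0 ≤ ⟪b - u, u⟫ := by
    have := hu 0 h0
    rw [zero_sub, inner_neg_right] at this
    linarith
  have h3 : ⟪b - u, u⟫ = 0 := le_antisymm h1 h2
  refine ⟨u, huK, fun w hw => ?_, h3⟩
  have := hu w hw
  rw [inner_sub_right] at this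
  linarith

lemma cone_union_zero_convex {S : Set E} (hconv : Convex ℝ S)
    (hsc : ∀ x ∈ S, ∀ α : ℝ, 0 < α → α • x ∈ S) : Convex ℝ (S ∪ {0}) := by
  intro x hx y hy α β hα hβ hαβ
  rcases hx with hx | hx
  · rcases hy with hy | hy
    · exact Or.inl (hconv hx hy hα hβ hαβ)
    · rw [mem_singleton_iff] at hy
      subst hy
      rcases eq_or_lt_of_le hα with h | h
      · right; simp [← h]
      · left; simpa using hsc x hx α h
  · rw [mem_singleton_iff] at hx
    subst hx
    rcases hy with hy | hy
    · rcases eq_or_lt_of_le hβ with h | h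
      · right; simp [← h]
      · left; simpa using hsc y hy β h
    · rw [mem_singleton_iff] at hy
      subst hy
      right; simp

lemma cone_closure_smul {S : Set E} (hsc : ∀ x ∈ S, ∀ α : ℝ, 0 < α → α • x ∈ S) :
    ∀ x ∈ closure (S ∪ {0}), ∀ α : ℝ, 0 ≤ α → α • x ∈ closure (S ∪ {0}) := by
  intro x hx α hα
  rcases eq_or_lt_of_le hα with h | h
  · rw [← h, zero_smul]
    exact subset_closure (Or.inr rfl)
  · refine map_mem_closure (continuous_const_smul α) hx ?_
    rintro y (hy | hy)
    · exact Or.inl (hsc y hy α h)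
    · rw [mem_singleton_iff] at hy
      subst hy
      right; simp

end Aux

/-- Lemma (Bounding the max of min of inner products): there is a unit vector
p ∈ C ∩ ⋂ᵢ pos(aᵢ) with ⟨aᵢ,p⟩ ≥ (1/d)·min_i ρ(aᵢ, C ∩ ⋂_{j≠i} pos(aⱼ)) for all i. -/
theorem max_min_inner_ge {d n : ℕ} (C : Set (EuclideanSpace ℝ (Fin d)))
    (hconv : Convex ℝ C)
    (hcone : ∀ x ∈ C, ∀ α : ℝ, 0 < α → α • x ∈ C)
    (hnp : ∃ t : EuclideanSpace ℝ (Fin d), ∀ x ∈ C, (inner ℝ t x : ℝ) < 0)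
    (a : Fin n → EuclideanSpace ℝ (Fin d))
    (hfeas : (C ∩ ⋂ i, posSet (a i)).Nonempty) :
    ∃ p ∈ C ∩ ⋂ i, posSet (a i), ‖p‖ = 1 ∧
      ∀ i, (⨅ k, rhoFeas (a k) (C ∩ ⋂ j ∈ {j : Fin n | j ≠ k}, posSet (a j))) / d ≤
        (inner ℝ (a i) p : ℝ) := by
  classical
  obtain ⟨t, ht⟩ := hnp
  obtain ⟨x₀, hx₀C, hx₀I⟩ := hfeas
  have hx₀pos : ∀ i, (0:ℝ) ≤ ⟪a i, x₀⟫ := fun i => Set.mem_iInter.1 hx₀I i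
  have hx₀ne : x₀ ≠ 0 := by
    intro h
    have h2 := ht x₀ hx₀C
    rw [h, inner_zero_right] at h2
    exact lt_irrefl 0 h2
  set ρ : ℝ := ⨅ k, rhoFeas (a k) (C ∩ ⋂ j ∈ {j : Fin n | j ≠ k}, posSet (a j)) with hρdef
  -- basic memberships for normalized x₀
  have hx₀norm : (0:ℝ) < ‖x₀‖ := norm_pos_iff.2 hx₀ne
  have hmem_norm : ∀ y : EuclideanSpace ℝ (Fin d), y ∈ C → (∀ i, (0:ℝ) ≤ ⟪a i, y⟫) → y ≠ 0 →
      (‖y‖⁻¹ • y) ∈ C ∩ ⋂ i, posSet (a i) ∧ ‖(‖y‖⁻¹ • y)‖ = 1 := by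
    intro y hyC hypos hyne
    have hy : (0:ℝ) < ‖y‖ := norm_pos_iff.2 hyne
    constructor
    · constructor
      · exact hcone y hyC _ (inv_pos.2 hy)
      · refine Set.mem_iInter.2 fun i => ?_
        show (0:ℝ) ≤ ⟪a i, ‖y‖⁻¹ • y⟫
        rw [real_inner_smul_right]
        exact mul_nonneg (inv_nonneg.2 hy.le) (hypos i)
    · rw [norm_smul, Real.norm_eq_abs, abs_of_nonneg (inv_nonneg.2 hy.le),
        inv_mul_cancel₀ hy.ne']
  rcases le_or_gt ρ 0 with hρ | hρpos
  · -- trivial case: ρ ≤ 0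
    obtain ⟨hmem, hnorm⟩ := hmem_norm x₀ hx₀C hx₀pos hx₀ne
    refine ⟨‖x₀‖⁻¹ • x₀, hmem, hnorm, fun i => ?_⟩
    have h1 : ρ / (d:ℝ) ≤ 0 := div_nonpos_iff.2 (Or.inr ⟨hρ, Nat.cast_nonneg d⟩)
    refine le_trans h1 ?_
    have := hmem.2
    rw [Set.mem_iInter] at this
    exact this i
  -- main case : ρ > 0
  have hn : 0 < n := by
    rcases Nat.eq_zero_or_pos n with h | h
    · exfalso
      subst h
      have : ρ = 0 := Real.iInf_of_isEmpty _
      linarith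
    · exact h
  haveI : Nonempty (Fin n) := ⟨⟨0, hn⟩⟩
  have hdne : d ≠ 0 := by
    intro h
    subst h
    exact hx₀ne (Subsingleton.elim _ _)
  -- the set F and its closed conic hull K
  set F : Set (EuclideanSpace ℝ (Fin d)) := C ∩ ⋂ i, posSet (a i) with hFdef
  have hx₀F : x₀ ∈ F := ⟨hx₀C, hx₀I⟩
  have hFC : ∀ x ∈ F, x ∈ C := fun x hx => hx.1
  have hFpos : ∀ x ∈ F, ∀ i, (0:ℝ) ≤ ⟪a i, x⟫ := fun x hx i => Set.mem_iInter.1 hx.2 i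
  have hposconv : ∀ b : EuclideanSpace ℝ (Fin d), Convex ℝ (posSet b) := by
    intro b x hx y hy α β hα hβ hαβ
    show (0:ℝ) ≤ ⟪b, α • x + β • y⟫
    rw [inner_add_right, real_inner_smul_right, real_inner_smul_right]
    exact add_nonneg (mul_nonneg hα hx) (mul_nonneg hβ hy)
  have hposclosed : ∀ b : EuclideanSpace ℝ (Fin d), IsClosed (posSet b) := by
    intro b
    exact isClosed_le continuous_const (Continuous.inner continuous_const continuous_id)
  have hFconv : Convex ℝ F := hconv.inter (convex_iInter fun i => hposconv _)
  have hFsc : ∀ x ∈ F, ∀ α : ℝ, 0 < α → α • x ∈ F := by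
    intro x hx α hα
    refine ⟨hcone x hx.1 α hα, Set.mem_iInter.2 fun i => ?_⟩
    show (0:ℝ) ≤ ⟪a i, α • x⟫
    rw [real_inner_smul_right]
    exact mul_nonneg hα.le (hFpos x hx i)
  set K : Set (EuclideanSpace ℝ (Fin d)) := closure (F ∪ {0}) with hKdef
  have hK0 : (0 : EuclideanSpace ℝ (Fin d)) ∈ K := subset_closure (Or.inr rfl)
  have hKconv : Convex ℝ K := (cone_union_zero_convex hFconv hFsc).closure
  have hKcl : IsClosed K := isClosed_closure
  have hKsc : ∀ x ∈ K, ∀ α : ℝ, 0 ≤ α → α • x ∈ K := cone_closure_smul hFsc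
  have hKpos : ∀ x ∈ K, ∀ i, (0:ℝ) ≤ ⟪a i, x⟫ := by
    intro x hx i
    have : K ⊆ posSet (a i) := by
      apply closure_minimal _ (hposclosed (a i))
      rintro y (hy | hy)
      · exact hFpos y hy i
      · rw [mem_singleton_iff] at hy; subst hy
        show (0:ℝ) ≤ ⟪a i, (0:EuclideanSpace ℝ (Fin d))⟫
        rw [inner_zero_right]
    exact this hx
  have hFK : F ⊆ K := fun x hx => subset_closure (Or.inl hx)
  -- the compact slice P
  set P : Set (EuclideanSpace ℝ (Fin d)) := K ∩ Metric.closedBall 0 1 with hPdef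
  have hPcompact : IsCompact P := (isCompact_closedBall (0 : EuclideanSpace ℝ (Fin d)) 1).inter_left hKcl
  have h0P : (0 : EuclideanSpace ℝ (Fin d)) ∈ P := ⟨hK0, Metric.mem_closedBall_self (by norm_num)⟩
  have hPK : ∀ x ∈ P, x ∈ K := fun x hx => hx.1
  have hPball : ∀ x ∈ P, ‖x‖ ≤ 1 := fun x hx => mem_closedBall_zero_iff.1 hx.2
  -- maximizers of linear functionals on P
  have hargmax : ∀ b : EuclideanSpace ℝ (Fin d), ∃ x ∈ P, ∀ y ∈ P, ⟪b, y⟫ ≤ ⟪b, x⟫ := by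
    intro b
    have hc : Continuous fun y : EuclideanSpace ℝ (Fin d) => (inner ℝ b y : ℝ) :=
      Continuous.inner continuous_const continuous_id
    obtain ⟨x, hxP, hmax⟩ := hPcompact.exists_isMaxOn ⟨0, h0P⟩ hc.continuousOn
    exact ⟨x, hxP, fun y hy => by simpa using hmax hy⟩
  have Hm := fun k => hargmax (a k)
  choose xm hxmP hxmmax using Hm
  set σ : Fin n → ℝ := fun k => ⟪a k, xm k⟫ with hσdef
  -- the key upper bound on rhoFeas
  have hrho_facts : ∀ k, 0 ≤ rhoFeas (a k) (C ∩ ⋂ j ∈ {j : Fin n | j ≠ k}, posSet (a j)) ∧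
      rhoFeas (a k) (C ∩ ⋂ j ∈ {j : Fin n | j ≠ k}, posSet (a j)) ≤ max (σ k) 0 := by
    intro k
    set Ck : Set (EuclideanSpace ℝ (Fin d)) := C ∩ ⋂ j ∈ {j : Fin n | j ≠ k}, posSet (a j)
      with hCkdef
    have hCkmem : ∀ x, x ∈ Ck ↔ x ∈ C ∧ ∀ j, j ≠ k → (0:ℝ) ≤ ⟪a j, x⟫ := by
      intro x
      rw [hCkdef]
      constructor
      · rintro ⟨h1, h2⟩
        exact ⟨h1, fun j hj => Set.mem_iInter₂.1 h2 j hj⟩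
      · rintro ⟨h1, h2⟩
        exact ⟨h1, Set.mem_iInter₂.2 fun j hj => h2 j hj⟩
    have hCkconv : Convex ℝ Ck := by
      rw [hCkdef]
      exact hconv.inter (convex_iInter₂ fun j _ => hposconv _)
    have hCksc : ∀ x ∈ Ck, ∀ α : ℝ, 0 < α → α • x ∈ Ck := by
      intro x hx α hα
      rw [hCkmem] at hx ⊢
      refine ⟨hcone x hx.1 α hα, fun j hj => ?_⟩
      rw [real_inner_smul_right]
      exact mul_nonneg hα.le (hx.2 j hj)
    have hFCk : ∀ z, z ∈ Ck → (0:ℝ) < ⟪a k, z⟫ → z ∈ F := by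
      intro z hz hzpos
      rw [hCkmem] at hz
      rw [hFdef]
      refine ⟨hz.1, Set.mem_iInter.2 fun i => ?_⟩
      show (0:ℝ) ≤ ⟪a i, z⟫
      rcases eq_or_ne i k with h | h
      · subst h; exact hzpos.le
      · exact hz.2 i h
    obtain ⟨u, huKk, hproj, hperp⟩ := coneProj (K := closure (Ck ∪ {0}))
      (subset_closure (Or.inr rfl))
      (cone_union_zero_convex hCkconv hCksc).closure isClosed_closure
      (cone_closure_smul hCksc) (a k)
    have hinner_u : ⟪a k, u⟫ = ‖u‖ ^ 2 := by
      have h1 : ⟪a k - u, u⟫ = 0 := hperp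
      rw [inner_sub_left] at h1
      have h2 : ⟪u, u⟫ = ‖u‖ ^ 2 := real_inner_self_eq_norm_sq u
      linarith
    have hu_le : ‖u‖ ≤ max (σ k) 0 := by
      rcases eq_or_ne u 0 with h | h
      · rw [h, norm_zero]; exact le_max_right _ _
      · have hun : (0:ℝ) < ‖u‖ := norm_pos_iff.2 h
        set u' := ‖u‖⁻¹ • u with hu'def
        have hu'Kk : u' ∈ closure (Ck ∪ {0}) := cone_closure_smul hCksc u huKk _ (inv_nonneg.2 hun.le)
        have hu'inner : ⟪a k, u'⟫ = ‖u‖ := by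
          rw [hu'def, real_inner_smul_right, hinner_u]
          field_simp
        have hu'norm : ‖u'‖ = 1 := by
          rw [hu'def, norm_smul, Real.norm_eq_abs, abs_of_nonneg (inv_nonneg.2 hun.le),
            inv_mul_cancel₀ hun.ne']
        have hu'K : u' ∈ K := by
          rw [hKdef, _root_.mem_closure_iff]
          intro o ho hu'o
          have hopen : IsOpen (o ∩ {z : EuclideanSpace ℝ (Fin d) | (0:ℝ) < ⟪a k, z⟫}) :=
            ho.inter (isOpen_lt continuous_const (Continuous.inner continuous_const continuous_id))
          have hu'mem : u' ∈ o ∩ {z : EuclideanSpace ℝ (Fin d) | (0:ℝ) < ⟪a k, z⟫} :=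
            ⟨hu'o, by show (0:ℝ) < ⟪a k, u'⟫; rw [hu'inner]; exact hun⟩
          obtain ⟨z, hzo, hzCk⟩ := _root_.mem_closure_iff.1 hu'Kk _ hopen hu'mem
          rcases hzCk with hzCk | hz0
          · exact ⟨z, hzo.1, Or.inl (hFCk z hzCk hzo.2)⟩
          · exfalso
            rw [mem_singleton_iff] at hz0
            have := hzo.2
            rw [hz0] at this
            simp only [Set.mem_setOf_eq, inner_zero_right] at this
            exact lt_irrefl 0 this
        have hu'P : u' ∈ P := ⟨hu'K, mem_closedBall_zero_iff.2 (le_of_eq hu'norm)⟩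
        have hle := hxmmax k u' hu'P
        rw [hu'inner] at hle
        exact le_max_of_le_left hle
    have h0S : ∀ Δa : EuclideanSpace ℝ (Fin d), ‖Δa‖ < (0:ℝ) →
        (Ck ∩ posSet (a k + Δa)).Nonempty :=
      fun Δa h => absurd h (not_lt.2 (norm_nonneg Δa))
    have hub : ∀ ε ∈ {ε : ℝ | ∀ Δa : EuclideanSpace ℝ (Fin d), ‖Δa‖ < ε →
        (Ck ∩ posSet (a k + Δa)).Nonempty}, ε ≤ max (σ k) 0 := by
      intro ε hε
      by_contra hlt
      push_neg at hlt
      have hεu : ‖u‖ < ε := lt_of_le_of_lt hu_le hlt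
      set c : ℝ := (ε - ‖u‖) / (2 * (‖t‖ + 1)) with hcdef
      have htpos : (0:ℝ) < ‖t‖ + 1 := by positivity
      have hcpos : 0 < c := div_pos (by linarith) (by positivity)
      have hnorm : ‖c • t - u‖ < ε := by
        have h1 : ‖c • t - u‖ ≤ ‖c • t‖ + ‖u‖ := norm_sub_le _ _
        have h2 : ‖c • t‖ = c * ‖t‖ := by rw [norm_smul, Real.norm_eq_abs, abs_of_pos hcpos]
        have h3 : c * ‖t‖ ≤ c * (‖t‖ + 1) := by nlinarith
        have h4 : c * (‖t‖ + 1) = (ε - ‖u‖) / 2 := by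
          rw [hcdef]; field_simp
        linarith
      obtain ⟨x, hxCk, hxpos⟩ := hε (c • t - u) hnorm
      have hxpos' : (0:ℝ) ≤ ⟪a k + (c • t - u), x⟫ := hxpos
      have hexp : ⟪a k + (c • t - u), x⟫ = ⟪a k - u, x⟫ + c * ⟪t, x⟫ := by
        rw [inner_add_left, inner_sub_left, inner_sub_left, real_inner_smul_left]; ring
      have h5 : ⟪a k - u, x⟫ ≤ 0 := hproj x (subset_closure (Or.inl hxCk))
      have h6 : ⟪t, x⟫ < 0 := ht x ((hCkmem x).1 hxCk).1
      nlinarith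
    have hSdef : rhoFeas (a k) Ck = sSup {ε : ℝ | ∀ Δa : EuclideanSpace ℝ (Fin d), ‖Δa‖ < ε →
        (Ck ∩ posSet (a k + Δa)).Nonempty} := rfl
    rw [hSdef]
    constructor
    · exact le_csSup ⟨max (σ k) 0, hub⟩ h0S
    · exact csSup_le ⟨0, h0S⟩ hub
  have hρ_le_ρk : ∀ k, ρ ≤ rhoFeas (a k) (C ∩ ⋂ j ∈ {j : Fin n | j ≠ k}, posSet (a j)) := by
    intro k
    apply ciInf_le ⟨0, _⟩ k
    rintro x ⟨j, rfl⟩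
    exact (hrho_facts j).1
  have hρσ : ∀ k, ρ ≤ σ k := by
    intro k
    have h1 := le_trans (hρ_le_ρk k) (hrho_facts k).2
    rcases le_max_iff.1 h1 with h | h
    · exact h
    · linarith
  have hσpos : ∀ k, 0 < σ k := fun k => lt_of_lt_of_le hρpos (hρσ k)
  -- dichotomy on d
  rcases Nat.lt_or_ge d 2 with hd2 | hd2
  · -- d = 1
    have hd1 : d = 1 := by omega
    obtain ⟨hmem, hnorm⟩ := hmem_norm x₀ hx₀C hx₀pos hx₀ne
    set p : EuclideanSpace ℝ (Fin d) := ‖x₀‖⁻¹ • x₀ with hpdef2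
    have hpnorm : ‖p‖ = 1 := hnorm
    have hpne : p ≠ 0 := by
      intro h
      rw [h, norm_zero] at hpnorm
      norm_num at hpnorm
    have hfr : Module.finrank ℝ (EuclideanSpace ℝ (Fin d)) = 1 := by
      rw [finrank_euclideanSpace_fin, hd1]
    have hspan : Submodule.span ℝ ({p} : Set (EuclideanSpace ℝ (Fin d))) = ⊤ := by
      apply Submodule.eq_top_of_finrank_eq
      rw [finrank_span_singleton hpne, hfr]
    have hrep : ∀ z : EuclideanSpace ℝ (Fin d), ∃ c : ℝ, c • p = z := by
      intro z
      have hz : z ∈ Submodule.span ℝ ({p} : Set (EuclideanSpace ℝ (Fin d))) := by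
        rw [hspan]; trivial
      exact Submodule.mem_span_singleton.1 hz
    have hx₀p : x₀ = ‖x₀‖ • p := by
      rw [hpdef2, smul_inv_smul₀ hx₀norm.ne']
    have hFray : ∀ y ∈ F, (0:ℝ) < ⟪p, y⟫ := by
      intro y hy
      obtain ⟨cy, hcy⟩ := hrep y
      have hiy : ⟪p, y⟫ = cy := by
        rw [← hcy, real_inner_smul_right, real_inner_self_eq_norm_sq, hpnorm]
        ring
      rw [hiy]
      by_contra hneg
      push_neg at hneg
      rcases eq_or_lt_of_le hneg with h0 | h0
      · -- cy = 0 : y = 0 contradicts strict separation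
        have hy0 : y = 0 := by rw [← hcy, h0, zero_smul]
        have := ht y (hFC y hy)
        rw [hy0, inner_zero_right] at this
        exact lt_irrefl 0 this
      · -- cy < 0 : 0 is a convex combination of y and x₀, contradiction
        set c₀ : ℝ := ‖x₀‖ with hc₀def
        have hc₀pos : 0 < c₀ := hx₀norm
        have hden : 0 < c₀ - cy := by linarith
        have hA : (0:ℝ) ≤ c₀ / (c₀ - cy) := by positivity
        have hB : (0:ℝ) ≤ -cy / (c₀ - cy) := by
          apply div_nonneg (by linarith) hden.le
        have hAB : c₀ / (c₀ - cy) + -cy / (c₀ - cy) = 1 := by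
          rw [← add_div]
          rw [div_eq_one_iff_eq hden.ne']
          ring
        have hco : c₀ / (c₀ - cy) * cy + -cy / (c₀ - cy) * c₀ = 0 := by
          field_simp
          ring
        have hzero : (c₀ / (c₀ - cy)) • y + (-cy / (c₀ - cy)) • x₀ = 0 := by
          rw [← hcy, hx₀p]
          have hgoal2 : (c₀ / (c₀ - cy)) • cy • p + (-cy / (c₀ - cy)) • c₀ • p
              = (c₀ / (c₀ - cy) * cy + -cy / (c₀ - cy) * c₀) • p := by
            module
          rw [hgoal2, hco, zero_smul]
        have h0F : (0 : EuclideanSpace ℝ (Fin d)) ∈ F := by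
          rw [← hzero]
          exact hFconv hy hx₀F hA hB hAB
        have := ht 0 (hFC 0 h0F)
        rw [inner_zero_right] at this
        exact lt_irrefl 0 this
    have hKp : ∀ z ∈ K, (0:ℝ) ≤ ⟪p, z⟫ := by
      intro z hz
      have hsub : K ⊆ {z : EuclideanSpace ℝ (Fin d) | (0:ℝ) ≤ ⟪p, z⟫} := by
        rw [hKdef]
        apply closure_minimal _ (isClosed_le continuous_const
          (Continuous.inner continuous_const continuous_id))
        rintro y (hy | hy)
        · exact (hFray y hy).le
        · rw [mem_singleton_iff] at hy
          subst hy
          show (0:ℝ) ≤ ⟪p, (0:EuclideanSpace ℝ (Fin d))⟫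
          rw [inner_zero_right]
      exact hsub hz
    refine ⟨p, hmem, hnorm, fun i => ?_⟩
    -- rewrite the target constant
    have hcast : ((d:ℝ)) = 1 := by rw [hd1]; norm_num
    rw [hcast, div_one]
    obtain ⟨c, hc⟩ := hrep (xm i)
    have hcnonneg : 0 ≤ c := by
      have := hKp (xm i) (hPK _ (hxmP i))
      rw [← hc, real_inner_smul_right, real_inner_self_eq_norm_sq, hpnorm] at this
      nlinarith
    have hcle : c ≤ 1 := by
      have hb := hPball _ (hxmP i)
      rw [← hc, norm_smul, Real.norm_eq_abs, hpnorm, mul_one, abs_of_nonneg hcnonneg] at hb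
      exact hb
    have hσi : σ i = c * ⟪a i, p⟫ := by
      show ⟪a i, xm i⟫ = c * ⟪a i, p⟫
      rw [← hc, real_inner_smul_right]
    have h1 : 0 < σ i := hσpos i
    have hcpos : 0 < c := by
      rcases eq_or_lt_of_le hcnonneg with h0 | h0
      · exfalso; rw [hσi, ← h0, zero_mul] at h1; exact lt_irrefl 0 h1
      · exact h0
    have hXpos : 0 < ⟪a i, p⟫ := by
      by_contra hX
      push_neg at hX
      nlinarith
    have : σ i ≤ ⟪a i, p⟫ := by
      rw [hσi]
      nlinarith
    linarith [hρσ i]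
  · -- d ≥ 2 : main case
    -- the min-function g and its maximizer over P
    set g : EuclideanSpace ℝ (Fin d) → ℝ :=
      fun p => Finset.univ.inf' Finset.univ_nonempty (fun i => ⟪a i, p⟫) with hgdef
    have hgcont : Continuous g := by
      apply Continuous.finset_inf'_apply
      intro i _
      exact Continuous.inner continuous_const continuous_id
    obtain ⟨ps, hpsP, hpsmax'⟩ := hPcompact.exists_isMaxOn ⟨0, h0P⟩ hgcont.continuousOn
    have hpsmax : ∀ y ∈ P, g y ≤ g ps := fun y hy => by simpa using hpsmax' hy
    set v : ℝ := g ps with hvdef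
    have hg0 : g 0 = 0 := by
      rw [hgdef]
      simp
    have hv0 : 0 ≤ v := by
      have := hpsmax 0 h0P
      rw [hg0] at this
      exact this
    have hv_le : ∀ i, v ≤ ⟪a i, ps⟫ := by
      intro i
      exact Finset.inf'_le _ (Finset.mem_univ i)
    have hg_lt : ∀ y c, (∀ i, c < ⟪a i, y⟫) → c < g y := by
      intro y c hc
      rw [hgdef]
      exact (Finset.lt_inf'_iff _).2 fun i _ => hc i
    have hg_le_inner : ∀ y i, g y ≤ ⟪a i, y⟫ := by
      intro y i
      exact Finset.inf'_le _ (Finset.mem_univ i)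
    have hdpos : (0:ℝ) < (d:ℝ) := by
      have : 0 < d := by omega
      exact_mod_cast this
    -- main claim
    have hgoal : ρ / (d:ℝ) < v := by
      by_contra hcon
      push_neg at hcon
      set W : Set (EuclideanSpace ℝ (Fin d)) := convexHull ℝ (Set.range a) with hWdef
      set U : Set (EuclideanSpace ℝ (Fin d)) := {z | ∀ x ∈ P, ⟪z, x⟫ ≤ v} with hUdef
      have hU0 : (0 : EuclideanSpace ℝ (Fin d)) ∈ U := by
        intro x hx
        rw [inner_zero_left]
        exact hv0
      have hUconv : Convex ℝ U := by
        intro z1 h1 z2 h2 α β hα hβ hαβ x hx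
        have e : ⟪α • z1 + β • z2, x⟫ = α * ⟪z1, x⟫ + β * ⟪z2, x⟫ := by
          rw [inner_add_left, real_inner_smul_left, real_inner_smul_left]
        show ⟪α • z1 + β • z2, x⟫ ≤ v
        rw [e]
        calc α * ⟪z1, x⟫ + β * ⟪z2, x⟫ ≤ α * v + β * v :=
              add_le_add (mul_le_mul_of_nonneg_left (h1 x hx) hα)
                (mul_le_mul_of_nonneg_left (h2 x hx) hβ)
          _ = v := by rw [← add_mul, hαβ, one_mul]
      have hUclosed : IsClosed U := by
        have hUeq : U = ⋂ x ∈ P, {z : EuclideanSpace ℝ (Fin d) | ⟪z, x⟫ ≤ v} := by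
          ext z
          rw [hUdef, Set.mem_setOf_eq, Set.mem_iInter₂]
          rfl
        rw [hUeq]
        exact isClosed_biInter fun x _ => isClosed_le
          (Continuous.inner continuous_id continuous_const) continuous_const
      have hWU : (W ∩ U).Nonempty := by
        rcases (W ∩ U).eq_empty_or_nonempty with hem | hne
        · exfalso
          have hdisj : Disjoint W U := Set.disjoint_iff_inter_eq_empty.2 hem
          obtain ⟨f, α, β, hfW, hαβ, hfU⟩ := geometric_hahn_banach_compact_closed
            (convex_convexHull ℝ _) ((Set.finite_range a).isCompact_convexHull (𝕜 := ℝ))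
            hUconv hUclosed hdisj
          set x := (InnerProductSpace.toDual ℝ (EuclideanSpace ℝ (Fin d))).symm f with hxdef
          have hfx : ∀ y, ⟪x, y⟫ = f y := fun y => InnerProductSpace.toDual_symm_apply
          have hβ0 : β < 0 := by
            have := hfU 0 hU0
            rwa [map_zero] at this
          have hfdir : ∀ w : EuclideanSpace ℝ (Fin d), (∀ y ∈ K, ⟪w, y⟫ ≤ 0) → 0 ≤ f w := by
            intro w hw
            by_contra hneg
            push_neg at hneg
            have hmem : ∀ s : ℝ, 0 ≤ s → (s • w) ∈ U := by
              intro s hs x' hx'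
              show ⟪s • w, x'⟫ ≤ v
              rw [real_inner_smul_left]
              have h1 : ⟪w, x'⟫ ≤ 0 := hw x' (hPK x' hx')
              nlinarith
            set s0 : ℝ := (β - 1) / f w with hs0
            have hs0pos : 0 ≤ s0 := (div_pos_of_neg_of_neg (by linarith) hneg).le
            have hlt := hfU _ (hmem s0 hs0pos)
            rw [map_smul, smul_eq_mul] at hlt
            have heq : s0 * f w = β - 1 := by
              rw [hs0]
              exact div_mul_cancel₀ _ hneg.ne
            linarith
          have hxK : -x ∈ K := by
            by_contra hnK
            obtain ⟨u0, hu0K, hproj0, hperp0⟩ := coneProj (K := K) hK0 hKconv hKcl hKsc (-x)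
            have hne2 : -x - u0 ≠ 0 := by
              intro h
              apply hnK
              have h2 : -x = u0 := by rwa [sub_eq_zero] at h
              rw [h2]
              exact hu0K
            have h1 := hfdir (-x - u0) hproj0
            rw [← hfx] at h1
            have hs1 : ⟪x, x⟫ = ‖x‖ ^ 2 := real_inner_self_eq_norm_sq x
            have hs2 : ⟪u0, u0⟫ = ‖u0‖ ^ 2 := real_inner_self_eq_norm_sq u0
            have e2 : ⟪x, u0⟫ = -‖u0‖ ^ 2 := by
              have h2 : ⟪-x - u0, u0⟫ = 0 := hperp0
              rw [inner_sub_left, inner_neg_left] at h2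
              linarith
            have e3 : ⟪x, -x - u0⟫ = -‖x‖ ^ 2 + ‖u0‖ ^ 2 := by
              rw [inner_sub_right, inner_neg_right, e2, hs1]
              ring
            have e4 : ‖-x - u0‖ ^ 2 = ‖x‖ ^ 2 + 2 * ⟪x, u0⟫ + ‖u0‖ ^ 2 := by
              rw [norm_sub_sq_real, inner_neg_left, norm_neg]
              ring
            have hwpos : 0 < ‖-x - u0‖ := norm_pos_iff.2 hne2
            rw [e3] at h1
            nlinarith
          have hxne : x ≠ 0 := by
            intro h
            have h0 : ∀ y, f y = 0 := by
              intro y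
              rw [← hfx, h, inner_zero_left]
            have h1 := hfW (a ⟨0, hn⟩) (subset_convexHull ℝ _ (Set.mem_range_self _))
            have h2 := hfU 0 hU0
            rw [h0] at h1
            rw [h0] at h2
            linarith
          have hxnorm : 0 < ‖x‖ := norm_pos_iff.2 hxne
          set xh : EuclideanSpace ℝ (Fin d) := ‖x‖⁻¹ • (-x) with hxhdef
          have hxhK : xh ∈ K := hKsc _ hxK _ (inv_nonneg.2 hxnorm.le)
          have hxhnorm : ‖xh‖ = 1 := by
            rw [hxhdef, norm_smul, Real.norm_eq_abs, abs_of_nonneg (inv_nonneg.2 hxnorm.le),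
              norm_neg, inv_mul_cancel₀ hxnorm.ne']
          have hxhP : xh ∈ P := ⟨hxhK, mem_closedBall_zero_iff.2 hxhnorm.le⟩
          have hzU : (v • xh) ∈ U := by
            intro y hy
            show ⟪v • xh, y⟫ ≤ v
            rw [real_inner_smul_left]
            have h1 : ⟪xh, y⟫ ≤ 1 := by
              have h2 := real_inner_le_norm xh y
              rw [hxhnorm, one_mul] at h2
              exact le_trans h2 (hPball y hy)
            nlinarith
          have hfz := hfU _ hzU
          have hfzval : f (v • xh) = -(v * ‖x‖) := by
            rw [map_smul, smul_eq_mul, ← hfx, hxhdef, real_inner_smul_right, inner_neg_right,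
              real_inner_self_eq_norm_sq]
            field_simp
          have hkey : ∀ i, v < ⟪a i, xh⟫ := by
            intro i
            have h1 := hfW (a i) (subset_convexHull ℝ _ (Set.mem_range_self i))
            have h2 : f (a i) < -(v * ‖x‖) := by
              rw [← hfzval]
              linarith
            rw [← hfx] at h2
            have e : ⟪a i, xh⟫ = ‖x‖⁻¹ * (-⟪x, a i⟫) := by
              rw [hxhdef, real_inner_smul_right, inner_neg_right, real_inner_comm]
            rw [e]
            have h3 : v * ‖x‖ < -⟪x, a i⟫ := by linarith
            have h4 := mul_lt_mul_of_pos_left h3 (inv_pos.2 hxnorm)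
            have e5 : ‖x‖⁻¹ * (v * ‖x‖) = v := by
              field_simp
            linarith
          have h2 := hg_lt xh v hkey
          linarith [hpsmax xh hxhP]
        · exact hne
      obtain ⟨q, hqW, hqU⟩ := hWU
      have hqW' : q ∈ convexHull ℝ (Set.range a) := hqW
      obtain ⟨ι, hfin, z, w, hzr, hzaff, hwpos, hwsum, hzq⟩ :=
        eq_pos_convex_span_of_mem_convexHull hqW'
      letI : Fintype ι := hfin
      have hwsum' : ∑ j, w j = 1 := hwsum
      have hzq' : ∑ j, w j • z j = q := hzq
      have hιne : Nonempty ι := by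
        by_contra hcon2
        rw [not_nonempty_iff] at hcon2
        haveI := hcon2
        simp at hwsum'
      choose idx hidx using fun j => hzr (Set.mem_range_self j)
      have hz_inner_nonneg : ∀ j, ∀ y ∈ K, 0 ≤ ⟪z j, y⟫ := by
        intro j y hy
        rw [← hidx j]
        exact hKpos y hy (idx j)
      have hz_ge : ∀ j, v ≤ ⟪z j, ps⟫ := by
        intro j
        rw [← hidx j]
        exact hv_le (idx j)
      have hqinner : ∀ y : EuclideanSpace ℝ (Fin d), ⟪q, y⟫ = ∑ j, w j * ⟪z j, y⟫ := by
        intro y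
        rw [← hzq', sum_inner]
        exact Finset.sum_congr rfl fun j _ => real_inner_smul_left _ _ _
      have hqps_le : ⟪q, ps⟫ ≤ v := hqU ps hpsP
      rcases eq_or_lt_of_le hv0 with hv0' | hvpos
      · -- v = 0 : immediate contradiction with σ k > 0
        obtain ⟨j0⟩ := hιne
        have h2 := hqU (xm (idx j0)) (hxmP (idx j0))
        rw [hqinner] at h2
        have h3 : w j0 * ⟪z j0, xm (idx j0)⟫ ≤ ∑ j, w j * ⟪z j, xm (idx j0)⟫ := by
          apply Finset.single_le_sum (f := fun j => w j * ⟪z j, xm (idx j0)⟫) _ (Finset.mem_univ j0)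
          intro j _
          exact mul_nonneg (hwpos j).le (hz_inner_nonneg j _ (hPK _ (hxmP (idx j0))))
        have h4 : ⟪z j0, xm (idx j0)⟫ = σ (idx j0) := by
          show _ = ⟪a (idx j0), xm (idx j0)⟫
          rw [hidx j0]
        rw [h4] at h3
        nlinarith [hwpos j0, hσpos (idx j0)]
      · -- 0 < v
        have hpsne : ps ≠ 0 := by
          intro h
          have h2 : v = g 0 := by rw [hvdef, h]
          rw [hg0] at h2
          linarith
        have hcomp : ∀ j, ⟪z j, ps⟫ = v := by
          have hsum : ∑ j, w j * (⟪z j, ps⟫ - v) ≤ 0 := by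
            have e : ∑ j, w j * (⟪z j, ps⟫ - v)
                = (∑ j, w j * ⟪z j, ps⟫) - (∑ j, w j) * v := by
              rw [Finset.sum_mul, ← Finset.sum_sub_distrib]
              apply Finset.sum_congr rfl
              intro j _
              ring
            rw [e, hwsum', one_mul, ← hqinner]
            linarith
          have hterm : ∀ j ∈ Finset.univ, (0:ℝ) ≤ w j * (⟪z j, ps⟫ - v) := fun j _ =>
            mul_nonneg (hwpos j).le (by linarith [hz_ge j])
          have hzero : ∀ j ∈ Finset.univ, w j * (⟪z j, ps⟫ - v) = 0 := by
            apply (Finset.sum_eq_zero_iff_of_nonneg hterm).1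
            exact le_antisymm hsum (Finset.sum_nonneg hterm)
          intro j
          have h5 := hzero j (Finset.mem_univ j)
          rcases mul_eq_zero.1 h5 with h6 | h6
          · exact absurd h6 (hwpos j).ne'
          · linarith
        have hcard : Fintype.card ι ≤ d := by
          obtain ⟨j0⟩ := hιne
          have hvs : vectorSpan ℝ (Set.range z) ≤ (Submodule.span ℝ ({ps} : Set (EuclideanSpace ℝ (Fin d))))ᗮ := by
            rw [vectorSpan_range_eq_span_range_vsub_right ℝ z j0, Submodule.span_le]
            rintro _ ⟨j, rfl⟩
            dsimp only
            rw [SetLike.mem_coe, Submodule.mem_orthogonal_singleton_iff_inner_right]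
            have hcomp' : ∀ j', ⟪ps, z j'⟫ = v := fun j' => by
              rw [real_inner_comm]; exact hcomp j'
            rw [vsub_eq_sub, inner_sub_right, hcomp' j, hcomp' j0, sub_self]
          haveI : Nonempty ι := ⟨j0⟩
          have hfr2 : Module.finrank ℝ ↥(vectorSpan ℝ (Set.range z)) + 1 = Fintype.card ι :=
            hzaff.finrank_vectorSpan_add_one
          have hfrE : Module.finrank ℝ (EuclideanSpace ℝ (Fin d)) = d := finrank_euclideanSpace_fin
          have hsp : Module.finrank ℝ ↥(Submodule.span ℝ ({ps} : Set (EuclideanSpace ℝ (Fin d)))) = 1 :=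
            finrank_span_singleton hpsne
          have horth := Submodule.finrank_add_finrank_orthogonal
            (K := Submodule.span ℝ ({ps} : Set (EuclideanSpace ℝ (Fin d))))
          have hmono := Submodule.finrank_mono hvs
          omega
        obtain ⟨jm, _, hjmax⟩ := Finset.exists_max_image Finset.univ w Finset.univ_nonempty
        have hwm_pos : 0 < w jm := hwpos jm
        have hsum_le : (1:ℝ) ≤ (Fintype.card ι : ℝ) * w jm := by
          have h5 : (∑ j, w j) ≤ ∑ _j : ι, w jm :=
            Finset.sum_le_sum fun j _ => hjmax j (Finset.mem_univ j)
          rw [hwsum', Finset.sum_const, Finset.card_univ, nsmul_eq_mul] at h5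
          exact h5
        have hdw : 1 ≤ (d:ℝ) * w jm := by
          have h5 : (Fintype.card ι : ℝ) ≤ (d:ℝ) := Nat.cast_le.2 hcard
          nlinarith
        have hσw : σ (idx jm) * w jm ≤ v := by
          have h2 := hqU (xm (idx jm)) (hxmP (idx jm))
          rw [hqinner] at h2
          have h3 : w jm * ⟪z jm, xm (idx jm)⟫ ≤ ∑ j, w j * ⟪z j, xm (idx jm)⟫ := by
            apply Finset.single_le_sum (f := fun j => w j * ⟪z j, xm (idx jm)⟫) _ (Finset.mem_univ jm)
            intro j _
            exact mul_nonneg (hwpos j).le (hz_inner_nonneg j _ (hPK _ (hxmP (idx jm))))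
          have h4 : ⟪z jm, xm (idx jm)⟫ = σ (idx jm) := by
            show _ = ⟪a (idx jm), xm (idx jm)⟫
            rw [hidx jm]
          rw [h4] at h3
          nlinarith
        have hρσk := hρσ (idx jm)
        have hchain1 : ρ * w jm ≤ v :=
          le_trans (mul_le_mul_of_nonneg_right hρσk hwm_pos.le) hσw
        have hchain2 : ρ / (d:ℝ) ≤ ρ * w jm := by
          rw [div_le_iff₀ hdpos]
          nlinarith
        have hveq : v = ρ / (d:ℝ) := le_antisymm hcon (by linarith)
        have hwv : ρ * w jm = v := le_antisymm hchain1 (by linarith)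
        have hσkρ : σ (idx jm) = ρ := by
          have h5 : σ (idx jm) ≤ ρ := by nlinarith
          exact le_antisymm h5 hρσk
        have hxmne : xm (idx jm) ≠ 0 := by
          intro h
          have h5 : σ (idx jm) = 0 := by
            show ⟪a (idx jm), xm (idx jm)⟫ = 0
            rw [h, inner_zero_right]
          linarith [hσpos (idx jm)]
        have hxmn_pos : 0 < ‖xm (idx jm)‖ := norm_pos_iff.2 hxmne
        have hxmnorm : ‖xm (idx jm)‖ = 1 := by
          rcases lt_or_eq_of_le (hPball _ (hxmP (idx jm))) with hlt | heq
          · exfalso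
            set x' := ‖xm (idx jm)‖⁻¹ • xm (idx jm) with hx'def
            have hx'P : x' ∈ P := by
              refine ⟨hKsc _ (hPK _ (hxmP (idx jm))) _ (inv_nonneg.2 hxmn_pos.le), ?_⟩
              rw [mem_closedBall_zero_iff, hx'def, norm_smul, Real.norm_eq_abs,
                abs_of_nonneg (inv_nonneg.2 hxmn_pos.le), inv_mul_cancel₀ hxmn_pos.ne']
            have hmax := hxmmax (idx jm) x' hx'P
            have e : ⟪a (idx jm), x'⟫ = ‖xm (idx jm)‖⁻¹ * σ (idx jm) := by
              rw [hx'def, real_inner_smul_right]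
            have hinv : 1 < ‖xm (idx jm)‖⁻¹ := one_lt_inv₀ hxmn_pos |>.2 hlt
            rw [e] at hmax
            nlinarith [hσpos (idx jm)]
          · exact heq
        have hpsnorm : ‖ps‖ = 1 := by
          rcases lt_or_eq_of_le (hPball _ hpsP) with hlt | heq
          · exfalso
            have hnp2 : 0 < ‖ps‖ := norm_pos_iff.2 hpsne
            set p' := ‖ps‖⁻¹ • ps with hp'def
            have hp'P : p' ∈ P := by
              refine ⟨hKsc _ (hPK _ hpsP) _ (inv_nonneg.2 hnp2.le), ?_⟩
              rw [mem_closedBall_zero_iff, hp'def, norm_smul, Real.norm_eq_abs,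
                abs_of_nonneg (inv_nonneg.2 hnp2.le), inv_mul_cancel₀ hnp2.ne']
            have hinv : 1 < ‖ps‖⁻¹ := one_lt_inv₀ hnp2 |>.2 hlt
            have hall : ∀ i, v < ⟪a i, p'⟫ := by
              intro i
              have e : ⟪a i, p'⟫ = ‖ps‖⁻¹ * ⟪a i, ps⟫ := by
                rw [hp'def, real_inner_smul_right]
              rw [e]
              nlinarith [hv_le i]
            have h5 := hg_lt p' v hall
            linarith [hpsmax p' hp'P]
          · exact heq
        have hq_xm : v ≤ ⟪q, xm (idx jm)⟫ := by
          rw [hqinner]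
          have h3 : w jm * ⟪z jm, xm (idx jm)⟫ ≤ ∑ j, w j * ⟪z j, xm (idx jm)⟫ := by
            apply Finset.single_le_sum (f := fun j => w j * ⟪z j, xm (idx jm)⟫) _ (Finset.mem_univ jm)
            intro j _
            exact mul_nonneg (hwpos j).le (hz_inner_nonneg j _ (hPK _ (hxmP (idx jm))))
          have h4 : ⟪z jm, xm (idx jm)⟫ = σ (idx jm) := by
            show _ = ⟪a (idx jm), xm (idx jm)⟫
            rw [hidx jm]
          rw [h4] at h3
          nlinarith
        set z2 : EuclideanSpace ℝ (Fin d) := ps + xm (idx jm) with hz2def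
        have hz2K : z2 ∈ K := by
          have hmid : ((1:ℝ)/2) • ps + ((1:ℝ)/2) • xm (idx jm) ∈ K :=
            hKconv (hPK _ hpsP) (hPK _ (hxmP (idx jm))) (by norm_num) (by norm_num) (by norm_num)
          have h5 := hKsc _ hmid 2 (by norm_num)
          have e : (2:ℝ) • (((1:ℝ)/2) • ps + ((1:ℝ)/2) • xm (idx jm)) = z2 := by
            rw [smul_add, smul_smul, smul_smul, hz2def]
            norm_num
          rwa [e] at h5
        have hq_z2 : 2 * v ≤ ⟪q, z2⟫ := by
          rw [hz2def, inner_add_right]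
          have h5 : ⟪q, ps⟫ = v := by
            rw [hqinner]
            have e : ∑ j, w j * ⟪z j, ps⟫ = ∑ j, w j * v := by
              apply Finset.sum_congr rfl
              intro j _
              rw [hcomp j]
            rw [e, ← Finset.sum_mul, hwsum', one_mul]
          linarith
        have hz2norm_le : ‖z2‖ ≤ 2 := by
          calc ‖z2‖ ≤ ‖ps‖ + ‖xm (idx jm)‖ := norm_add_le _ _
            _ = 2 := by rw [hpsnorm, hxmnorm]; norm_num
        have hz2ne : z2 ≠ 0 := by
          intro h
          rw [h, inner_zero_right] at hq_z2
          linarith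
        have hz2pos : 0 < ‖z2‖ := norm_pos_iff.2 hz2ne
        have hz2hatP : ‖z2‖⁻¹ • z2 ∈ P := by
          refine ⟨hKsc _ hz2K _ (inv_nonneg.2 hz2pos.le), ?_⟩
          rw [mem_closedBall_zero_iff, norm_smul, Real.norm_eq_abs,
            abs_of_nonneg (inv_nonneg.2 hz2pos.le), inv_mul_cancel₀ hz2pos.ne']
        have h5 := hqU _ hz2hatP
        rw [real_inner_smul_right] at h5
        have h6 : ⟪q, z2⟫ ≤ v * ‖z2‖ := by
          have h7 := mul_le_mul_of_nonneg_right h5 hz2pos.le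
          have e : ‖z2‖⁻¹ * ⟪q, z2⟫ * ‖z2‖ = ⟪q, z2⟫ := by
            field_simp
          rw [e] at h7
          linarith [h7]
        have hz2norm : ‖z2‖ = 2 := by
          have h8 : 2 ≤ ‖z2‖ := by nlinarith
          linarith
        have hinner1 : ⟪ps, xm (idx jm)⟫ = 1 := by
          have e : ‖z2‖ ^ 2 = ‖ps‖ ^ 2 + 2 * ⟪ps, xm (idx jm)⟫ + ‖xm (idx jm)‖ ^ 2 := by
            rw [hz2def, norm_add_sq_real]
          rw [hz2norm, hpsnorm, hxmnorm] at e
          nlinarith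
        have hps_eq : ps = xm (idx jm) := by
          have e2 : ‖ps - xm (idx jm)‖ ^ 2 = 0 := by
            rw [norm_sub_sq_real, hpsnorm, hxmnorm, hinner1]
            norm_num
          have e3 : ‖ps - xm (idx jm)‖ = 0 := by
            exact pow_eq_zero_iff (by norm_num) |>.1 e2
          rwa [norm_sub_eq_zero_iff] at e3
        have hfin2 : σ (idx jm) = v := by
          have h5 := hcomp jm
          have e : ⟪a (idx jm), ps⟫ = v := by rw [hidx jm]; exact h5
          show ⟪a (idx jm), xm (idx jm)⟫ = v
          rw [← hps_eq]
          exact e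
        have hd2' : (2:ℝ) ≤ (d:ℝ) := by exact_mod_cast hd2
        have hfinal : ρ = ρ / (d:ℝ) := by linarith
        rw [eq_div_iff hdpos.ne'] at hfinal
        nlinarith
    -- approximation step : find the witness inside F itself
    set A : ℝ := Finset.univ.sup' Finset.univ_nonempty (fun i => ‖a i‖) with hAdef
    have hA : ∀ i, ‖a i‖ ≤ A := fun i => Finset.le_sup' (f := fun i => ‖a i‖) (Finset.mem_univ i)
    have hA0 : 0 ≤ A := le_trans (norm_nonneg (a ⟨0, hn⟩)) (hA _)
    have hρd_pos : 0 < ρ / (d:ℝ) := div_pos hρpos hdpos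
    set ε : ℝ := (v - ρ/(d:ℝ)) / (A + ρ/(d:ℝ) + 1) with hεdef
    have hden : 0 < A + ρ/(d:ℝ) + 1 := by linarith
    have hεpos : 0 < ε := div_pos (by linarith) hden
    have hεid : ε * (A + ρ/(d:ℝ) + 1) = v - ρ/(d:ℝ) := by
      rw [hεdef]
      exact div_mul_cancel₀ _ hden.ne'
    have hpsK : ps ∈ closure (F ∪ {0}) := by
      have := hPK ps hpsP
      rwa [hKdef] at this
    obtain ⟨y, hyF0, hydist⟩ := Metric.mem_closure_iff.1 hpsK ε hεpos
    have hyinner : ∀ i, v - A * ε ≤ ⟪a i, y⟫ := by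
      intro i
      have h1 : ⟪a i, ps - y⟫ ≤ A * ε := by
        calc ⟪a i, ps - y⟫ ≤ ‖a i‖ * ‖ps - y‖ := real_inner_le_norm _ _
          _ ≤ A * ε := by
            apply mul_le_mul (hA i) _ (norm_nonneg _) hA0
            rw [← dist_eq_norm]
            exact hydist.le
      have h2 : ⟪a i, ps⟫ - ⟪a i, y⟫ = ⟪a i, ps - y⟫ := by rw [inner_sub_right]
      linarith [hv_le i]
    have hvAε : ρ/(d:ℝ) * (1 + ε) < v - A * ε := by nlinarith
    have hyne : y ≠ 0 := by
      intro h
      have h5 := hyinner ⟨0, hn⟩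
      rw [h, inner_zero_right] at h5
      nlinarith
    have hyF : y ∈ F := by
      rcases hyF0 with h | h
      · exact h
      · rw [mem_singleton_iff] at h
        exact absurd h hyne
    have hynorm_le : ‖y‖ ≤ 1 + ε := by
      have h1 : ‖y‖ ≤ ‖ps‖ + ‖y - ps‖ := by
        have := norm_add_le ps (y - ps)
        rwa [add_sub_cancel] at this
      have h2 : ‖y - ps‖ < ε := by
        rw [← dist_eq_norm, dist_comm]
        exact hydist
      linarith [hPball ps hpsP]
    have hypos : 0 < ‖y‖ := norm_pos_iff.2 hyne
    obtain ⟨hmem, hnorm⟩ := hmem_norm y (hFC y hyF) (hFpos y hyF) hyne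
    refine ⟨‖y‖⁻¹ • y, hmem, hnorm, fun i => ?_⟩
    have e : ⟪a i, ‖y‖⁻¹ • y⟫ = ‖y‖⁻¹ * ⟪a i, y⟫ := real_inner_smul_right _ _ _
    show ρ / (d:ℝ) ≤ ⟪a i, ‖y‖⁻¹ • y⟫
    rw [e]
    have h4 : ρ/(d:ℝ) * ‖y‖ < ⟪a i, y⟫ := by
      have h3 : ρ/(d:ℝ) * ‖y‖ ≤ ρ/(d:ℝ) * (1+ε) :=
        mul_le_mul_of_nonneg_left hynorm_le hρd_pos.le
      linarith [hyinner i]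
    have h5 : ‖y‖⁻¹ * (ρ/(d:ℝ) * ‖y‖) ≤ ‖y‖⁻¹ * ⟪a i, y⟫ :=
      mul_le_mul_of_nonneg_left h4.le (inv_nonneg.2 hypos.le)
    have h6 : ‖y‖⁻¹ * (ρ/(d:ℝ) * ‖y‖) = ρ/(d:ℝ) := by
      field_simp
    linarith
end

section
/- Let C be a non-pointed convex cone and a be a vector such that C ∩ pos(a) is empty. Then for every unit vector p ∈ C, ⟨p, a⟩ ≤ -ρ(a, C), where ρ(a, C) is the supremum of ε such that every Δa with ‖Δa‖ < ε keeps C ∩ pos(a+Δa) empty. -/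
/-- Single-constraint distance to ill-posedness, infeasible case:
ρ(a, C) = sup{ε : ‖Δa‖ < ε implies C ∩ pos(a+Δa) is empty}. -/
noncomputable def rhoInfeas {d : ℕ} (a : EuclideanSpace ℝ (Fin d))
    (C : Set (EuclideanSpace ℝ (Fin d))) : ℝ :=
  sSup {ε : ℝ | ∀ Δa : EuclideanSpace ℝ (Fin d), ‖Δa‖ < ε →
    C ∩ posSet (a + Δa) = ∅}

/-- Lemma (ρ bound on inner product): if C ∩ pos(a) is empty, then every unit
vector p ∈ C satisfies ⟨p,a⟩ ≤ -ρ(a,C). -/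
theorem inner_le_neg_rho {d : ℕ} (C : Set (EuclideanSpace ℝ (Fin d)))
    (hconv : Convex ℝ C)
    (hcone : ∀ x ∈ C, ∀ α : ℝ, 0 < α → α • x ∈ C)
    (hnp : ∃ t : EuclideanSpace ℝ (Fin d), ∀ x ∈ C, (inner ℝ t x : ℝ) < 0)
    (a : EuclideanSpace ℝ (Fin d)) (hinf : C ∩ posSet a = ∅) :
    ∀ p ∈ C, ‖p‖ = 1 → (inner ℝ p a : ℝ) ≤ -(rhoInfeas a C) := by
  intro p hp hpn
  -- ⟨a,p⟩ < 0
  have hneg : (inner ℝ a p : ℝ) < 0 := by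
    by_contra h
    push_neg at h
    have : p ∈ C ∩ posSet a := ⟨hp, h⟩
    rw [hinf] at this
    exact this
  have key : ∀ ε ∈ {ε : ℝ | ∀ Δa : EuclideanSpace ℝ (Fin d), ‖Δa‖ < ε →
      C ∩ posSet (a + Δa) = ∅}, ε ≤ -(inner ℝ p a : ℝ) := by
    intro ε hε
    by_contra h
    push_neg at h
    set δ : ℝ := -(inner ℝ p a : ℝ) with hδ
    have hneg' : (inner ℝ p a : ℝ) < 0 := by rwa [real_inner_comm] at hneg
    have hδpos : 0 < δ := by simp only [hδ]; linarith
    have hnorm : ‖δ • p‖ < ε := by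
      rw [norm_smul, hpn, mul_one, Real.norm_eq_abs, abs_of_pos hδpos]
      exact h
    have := hε (δ • p) hnorm
    have hmem : p ∈ C ∩ posSet (a + δ • p) := by
      refine ⟨hp, ?_⟩
      simp only [posSet, Set.mem_setOf_eq, inner_add_left, real_inner_smul_left]
      have hpp : (inner ℝ p p : ℝ) = 1 := by
        rw [real_inner_self_eq_norm_sq, hpn]; norm_num
      rw [hpp, real_inner_comm]
      simp [hδ]
    rw [this] at hmem
    exact hmem
  have hne : (0:ℝ) ∈ {ε : ℝ | ∀ Δa : EuclideanSpace ℝ (Fin d), ‖Δa‖ < ε →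
      C ∩ posSet (a + Δa) = ∅} := by
    intro Δa hΔa
    exact absurd hΔa (norm_nonneg _).not_gt
  have hsup : rhoInfeas a C ≤ -(inner ℝ p a : ℝ) :=
    Real.sSup_le key (by linarith [key 0 hne])
  linarith
end

section
/- Let C be a non-pointed convex cone in R^d, p ∈ C a unit vector, and a₁,...,a_{k+1} ∈ R^d satisfying ⟨aᵢ, p⟩ ≥ α for 1 ≤ i ≤ k (with α > 0) and ⟨a_{k+1}, x⟩ ≤ -β for all unit vectors x ∈ C ∩ ⋂_{i=1}^{k} pos(aᵢ) (with β > 0). Then for every ε with ε ≤ α/2 and ε < β/(4 + 2‖a_{k+1}‖/α), and every choice of Δa₁,...,Δa_{k+1} each of norm less than ε, the set C ∩ ⋂_{i=1}^{k+1} pos(aᵢ + Δaᵢ) is empty. Consequently ρ([a₁,...,a_{k+1}], C) ≥ min{α/2, αβ/(4α + 2‖a_{k+1}‖)}. -/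
/-- Distance to ill-posedness of a system of rows over a cone, infeasible case:
the sup of ε such that every perturbation of the rows of Frobenius norm less than ε
keeps the system infeasible. -/
noncomputable def rhoInfeasM {d n : ℕ} (a : Fin n → EuclideanSpace ℝ (Fin d))
    (C : Set (EuclideanSpace ℝ (Fin d))) : ℝ :=
  sSup {ε : ℝ | ∀ Δ : Fin n → EuclideanSpace ℝ (Fin d),
    Real.sqrt (∑ i, ‖Δ i‖ ^ 2) < ε →
    C ∩ ⋂ i, posSet (a i + Δ i) = ∅}

/-- Lemma (The feasible-to-infeasible transition). -/
theorem feasible_to_infeasible_transition {d k : ℕ}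
    (C : Set (EuclideanSpace ℝ (Fin d)))
    (hconv : Convex ℝ C)
    (hcone : ∀ x ∈ C, ∀ α : ℝ, 0 < α → α • x ∈ C)
    (hnp : ∃ t : EuclideanSpace ℝ (Fin d), ∀ x ∈ C, (inner ℝ t x : ℝ) < 0)
    (p : EuclideanSpace ℝ (Fin d)) (hpC : p ∈ C) (hp : ‖p‖ = 1)
    (a : Fin (k + 1) → EuclideanSpace ℝ (Fin d))
    (α β : ℝ) (hα : 0 < α) (hβ : 0 < β)
    (h1 : ∀ i : Fin k, α ≤ (inner ℝ (a i.castSucc) p : ℝ))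
    (h2 : ∀ x ∈ C, ‖x‖ = 1 → (∀ i : Fin k, (0 : ℝ) ≤ inner ℝ (a i.castSucc) x) →
      (inner ℝ (a (Fin.last k)) x : ℝ) ≤ -β) :
    (∀ ε : ℝ, ε ≤ α / 2 → ε < β / (4 + 2 * ‖a (Fin.last k)‖ / α) →
      ∀ Δ : Fin (k + 1) → EuclideanSpace ℝ (Fin d), (∀ i, ‖Δ i‖ < ε) →
        C ∩ ⋂ i, posSet (a i + Δ i) = ∅) ∧
    min (α / 2) (α * β / (4 * α + 2 * ‖a (Fin.last k)‖)) ≤ rhoInfeasM a C := by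
  set A : ℝ := ‖a (Fin.last k)‖ with hA
  have hA0 : 0 ≤ A := norm_nonneg _
  have key : ∀ ε : ℝ, ε ≤ α / 2 → ε < β / (4 + 2 * A / α) →
      ∀ Δ : Fin (k + 1) → EuclideanSpace ℝ (Fin d), (∀ i, ‖Δ i‖ < ε) →
        C ∩ ⋂ i, posSet (a i + Δ i) = ∅ := by
    intro ε hε1 hε2 Δ hΔ
    by_contra hne
    rw [Set.eq_empty_iff_forall_notMem] at hne
    push_neg at hne
    obtain ⟨x, hxC, hxI⟩ := hne
    simp only [Set.mem_iInter, posSet, Set.mem_setOf_eq] at hxI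
    have hε0 : 0 < ε := lt_of_le_of_lt (norm_nonneg (Δ (Fin.last k))) (hΔ (Fin.last k))
    obtain ⟨t, ht⟩ := hnp
    have hx0 : x ≠ 0 := by
      intro h0
      have := ht x hxC
      rw [h0, inner_zero_right] at this
      exact lt_irrefl 0 this
    have hxn : (0:ℝ) < ‖x‖ := norm_pos_iff.mpr hx0
    set u : EuclideanSpace ℝ (Fin d) := ‖x‖⁻¹ • x with hu
    clear_value u
    have huC : u ∈ C := by rw [hu]; exact hcone x hxC _ (inv_pos.mpr hxn)
    have hun : ‖u‖ = 1 := by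
      rw [hu, norm_smul, norm_inv, norm_norm, inv_mul_cancel₀ hxn.ne']
    have hui : ∀ i, (0:ℝ) ≤ inner ℝ (a i + Δ i) u := by
      intro i
      rw [hu, real_inner_smul_right]
      exact mul_nonneg (inv_nonneg.mpr hxn.le) (hxI i)
    have hau : ∀ i, -‖Δ i‖ ≤ (inner ℝ (a i) u : ℝ) := by
      intro i
      have h := hui i
      rw [inner_add_left] at h
      have hd : (inner ℝ (Δ i) u : ℝ) ≤ ‖Δ i‖ := by
        have := real_inner_le_norm (Δ i) u
        rwa [hun, mul_one] at this
      linarith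
    set s : ℝ := ε / α with hs
    have hs0 : 0 < s := div_pos hε0 hα
    have hs2 : s ≤ 1/2 := by rw [hs, div_le_iff₀ hα]; linarith
    have h1s : (0:ℝ) < 1 + s := by linarith
    set y : EuclideanSpace ℝ (Fin d) := u + s • p with hy
    clear_value y
    have hyC : y ∈ C := by
      have hz : (1/(1+s)) • u + (s/(1+s)) • p ∈ C :=
        hconv huC hpC (by positivity) (by positivity) (by field_simp)
      have hmem := hcone _ hz (1+s) h1s
      have e1 : (1+s) * (1/(1+s)) = 1 := by field_simp
      have e2 : (1+s) * (s/(1+s)) = s := by field_simp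
      rw [smul_add, smul_smul, smul_smul, e1, e2, one_smul] at hmem
      rw [hy]; exact hmem
    have hyn : 1 - s ≤ ‖y‖ := by
      have h := norm_add_le y (-(s • p))
      have he : y + -(s • p) = u := by rw [hy]; abel
      rw [he, hun, norm_neg, norm_smul, hp, mul_one, Real.norm_eq_abs,
        abs_of_pos hs0] at h
      linarith
    have hynpos : (0:ℝ) < ‖y‖ := by linarith
    have hay : ∀ i : Fin k, (0:ℝ) ≤ inner ℝ (a i.castSucc) y := by
      intro i
      rw [hy, inner_add_right, real_inner_smul_right]
      have h1' := h1 i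
      have h2' := hau i.castSucc
      have h3' := hΔ i.castSucc
      have hsα : s * α = ε := by rw [hs]; field_simp
      nlinarith [mul_le_mul_of_nonneg_left h1' hs0.le]
    set w : EuclideanSpace ℝ (Fin d) := ‖y‖⁻¹ • y with hw
    clear_value w
    have hwC : w ∈ C := by rw [hw]; exact hcone y hyC _ (inv_pos.mpr hynpos)
    have hwn : ‖w‖ = 1 := by
      rw [hw, norm_smul, norm_inv, norm_norm, inv_mul_cancel₀ hynpos.ne']
    have hwi : ∀ i : Fin k, (0:ℝ) ≤ inner ℝ (a i.castSucc) w := by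
      intro i
      rw [hw, real_inner_smul_right]
      exact mul_nonneg (inv_nonneg.mpr hynpos.le) (hay i)
    have hlast := h2 w hwC hwn hwi
    rw [hw, real_inner_smul_right] at hlast
    have hlasty : (inner ℝ (a (Fin.last k)) y : ℝ) ≤ -β * ‖y‖ := by
      calc (inner ℝ (a (Fin.last k)) y : ℝ)
          = ‖y‖ * (‖y‖⁻¹ * inner ℝ (a (Fin.last k)) y) := by
            rw [← mul_assoc, mul_inv_cancel₀ hynpos.ne', one_mul]
        _ ≤ ‖y‖ * (-β) := mul_le_mul_of_nonneg_left hlast hynpos.le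
        _ = -β * ‖y‖ := by ring
    have hlow : -ε - s * A ≤ (inner ℝ (a (Fin.last k)) y : ℝ) := by
      rw [hy, inner_add_right, real_inner_smul_right]
      have h2' := hau (Fin.last k)
      have h3' := hΔ (Fin.last k)
      have hap : -A ≤ (inner ℝ (a (Fin.last k)) p : ℝ) := by
        have := real_inner_le_norm (a (Fin.last k)) (-p)
        rw [inner_neg_right, norm_neg, hp, mul_one] at this
        linarith
      nlinarith [mul_le_mul_of_nonneg_left hap hs0.le]
    have hD : (0:ℝ) < 4 + 2 * A / α := by positivity
    rw [lt_div_iff₀ hD] at hε2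
    have hexp : ε * (4 + 2 * A / α) = 4 * ε + 2 * (s * A) := by rw [hs]; ring
    have hfin : ε + s * A < β / 2 := by linarith
    have hfin2 : -β * ‖y‖ ≤ -β / 2 := by
      have h12 : β * (1/2) ≤ β * ‖y‖ :=
        mul_le_mul_of_nonneg_left (by linarith : (1:ℝ)/2 ≤ ‖y‖) hβ.le
      linarith
    linarith
  constructor
  · exact key
  · have hD : (0:ℝ) < 4 + 2 * A / α := by positivity
    have hD2 : (0:ℝ) < 4 * α + 2 * A := by positivity
    have heq : β / (4 + 2 * A / α) = α * β / (4 * α + 2 * A) := by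
      rw [div_eq_div_iff hD.ne' hD2.ne']
      field_simp
    set m : ℝ := min (α / 2) (α * β / (4 * α + 2 * A)) with hm
    set S : Set ℝ := {ε : ℝ | ∀ Δ : Fin (k+1) → EuclideanSpace ℝ (Fin d),
      Real.sqrt (∑ i, ‖Δ i‖ ^ 2) < ε →
      C ∩ ⋂ i, posSet (a i + Δ i) = ∅} with hS
    have hbdd : BddAbove S := by
      refine ⟨Real.sqrt (∑ i, ‖p - a i‖ ^ 2), ?_⟩
      intro ε hε
      by_contra hlt
      push_neg at hlt
      have hemp := hε (fun i => p - a i) hlt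
      rw [Set.eq_empty_iff_forall_notMem] at hemp
      apply hemp p
      refine ⟨hpC, ?_⟩
      rw [Set.mem_iInter]
      intro i
      simp only [posSet, Set.mem_setOf_eq, add_sub_cancel]
      rw [real_inner_self_eq_norm_sq, hp]
      norm_num
    have hmS : m ∈ S := by
      intro Δ hΔ
      set s0 : ℝ := Real.sqrt (∑ i, ‖Δ i‖ ^ 2) with hs0
      have hs0nn : 0 ≤ s0 := Real.sqrt_nonneg _
      have hΔi : ∀ i, ‖Δ i‖ ≤ s0 := by
        intro i
        have hle : ‖Δ i‖ ^ 2 ≤ ∑ j, ‖Δ j‖ ^ 2 :=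
          Finset.single_le_sum (fun j _ => sq_nonneg (‖Δ j‖)) (Finset.mem_univ i)
        have := Real.sqrt_le_sqrt hle
        rwa [Real.sqrt_sq (norm_nonneg _)] at this
      refine key ((s0 + m)/2) ?_ ?_ Δ ?_
      · have h := min_le_left (α / 2) (α * β / (4 * α + 2 * A))
        rw [← hm] at h
        linarith
      · rw [heq]
        have h := min_le_right (α / 2) (α * β / (4 * α + 2 * A))
        rw [← hm] at h
        linarith
      · intro i
        have := hΔi i
        linarith
    have hle := le_csSup hbdd hmS
    simpa [rhoInfeasM, hS, hm] using hle
end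

section
/- Let A be an n-by-d matrix with rows a₁,...,aₙ and c ∈ R^d nonzero. Set z = (1/n)∑ᵢ aᵢ, xᵢ = aᵢ - z, k₁ = dist(z, ∂(ray(c) - hull(x₁,...,xₙ))), k₂ = ‖c‖. Then 1/ρ(A,c) ≤ max{ 8/k₁, 4/k₂, 24 maxᵢ‖aᵢ‖ / (k₁k₂) }, where ρ(A,c) is the distance to ill-posedness of the system A^T y = c, y ≥ 0. -/
open Pointwise

/-- ray(c) = {αc : α > 0}. -/
def rayS {d : ℕ} (c : EuclideanSpace ℝ (Fin d)) : Set (EuclideanSpace ℝ (Fin d)) :=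
  {x | ∃ α : ℝ, 0 < α ∧ x = α • c}

/-- The system Aᵀy = c, y ≥ 0 is feasible: c = ∑ yᵢ aᵢ for some y ≥ 0. -/
def FeasDual {d n : ℕ} (a : Fin n → EuclideanSpace ℝ (Fin d))
    (c : EuclideanSpace ℝ (Fin d)) : Prop :=
  ∃ y : Fin n → ℝ, (∀ i, 0 ≤ y i) ∧ ∑ i, y i • a i = c

/-- Distance to ill-posedness of the system Aᵀy = c, y ≥ 0: the sup of ε such that
every perturbation with ‖ΔA‖_F + ‖Δc‖ < ε preserves the feasibility status. -/
noncomputable def rhoDual {d n : ℕ} (a : Fin n → EuclideanSpace ℝ (Fin d))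
    (c : EuclideanSpace ℝ (Fin d)) : ℝ :=
  sSup {ε : ℝ | ∀ (Δa : Fin n → EuclideanSpace ℝ (Fin d)) (Δc : EuclideanSpace ℝ (Fin d)),
    Real.sqrt (∑ i, ‖Δa i‖ ^ 2) + ‖Δc‖ < ε →
    (FeasDual (fun i => a i + Δa i) (c + Δc) ↔ FeasDual a c)}

namespace RhoAux
open RealInnerProductSpace
variable {d n : ℕ}

local notation "E" => EuclideanSpace ℝ (Fin d)

lemma sum_smul_mem_hull {x : Fin n → E} {l : Fin n → ℝ} (h0 : ∀ i, 0 ≤ l i)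
    (h1 : ∑ i, l i = 1) : ∑ i, l i • x i ∈ convexHull ℝ (Set.range x) := by
  have := Finset.centerMass_mem_convexHull (Finset.univ : Finset (Fin n))
    (w := l) (z := x) (fun i _ => h0 i) (by rw [h1]; norm_num)
    (fun i _ => Set.mem_range_self i)
  rwa [Finset.centerMass_eq_of_sum_1 _ _ h1] at this

lemma mem_hull_iff {x : Fin n → E} {h : E} :
    h ∈ convexHull ℝ (Set.range x) ↔
      ∃ l : Fin n → ℝ, (∀ i, 0 ≤ l i) ∧ ∑ i, l i = 1 ∧ ∑ i, l i • x i = h := by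
  constructor
  · intro hh
    have hsub : convexHull ℝ (Set.range x) ⊆
        {h : E | ∃ l : Fin n → ℝ, (∀ i, 0 ≤ l i) ∧ ∑ i, l i = 1 ∧ ∑ i, l i • x i = h} := by
      apply convexHull_min
      · rintro _ ⟨j, rfl⟩
        refine ⟨fun i => if i = j then 1 else 0, fun i => by positivity, by simp, by simp⟩
      · rintro w₁ ⟨l₁, h₁0, h₁1, rfl⟩ w₂ ⟨l₂, h₂0, h₂1, rfl⟩ p q hp hq hpq
        refine ⟨fun i => p * l₁ i + q * l₂ i,
          fun i => add_nonneg (mul_nonneg hp (h₁0 i)) (mul_nonneg hq (h₂0 i)), ?_, ?_⟩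
        · simp [Finset.sum_add_distrib, ← Finset.mul_sum, h₁1, h₂1, hpq]
        · simp only [add_smul, mul_smul, Finset.sum_add_distrib, Finset.smul_sum]
    exact hsub hh
  · rintro ⟨l, h0, h1, rfl⟩
    exact sum_smul_mem_hull h0 h1


lemma norm_combo_le {x : Fin n → E} {l : Fin n → ℝ} (h0 : ∀ i, 0 ≤ l i)
    (h1 : ∑ i, l i = 1) {R : ℝ} (hR : ∀ i, ‖x i‖ ≤ R) : ‖∑ i, l i • x i‖ ≤ R := by
  calc ‖∑ i, l i • x i‖ ≤ ∑ i, ‖l i • x i‖ := norm_sum_le _ _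
    _ ≤ ∑ i, l i * R := by
        apply Finset.sum_le_sum
        intro i _
        rw [norm_smul, Real.norm_eq_abs, abs_of_nonneg (h0 i)]
        exact mul_le_mul_of_nonneg_left (hR i) (h0 i)
    _ = R := by rw [← Finset.sum_mul, h1, one_mul]

lemma feas_char (hn : 0 < n) {a : Fin n → E} {c : E} (hc : c ≠ 0) :
    FeasDual a c ↔ ∃ (t : ℝ) (l : Fin n → ℝ), 0 < t ∧ (∀ i, 0 ≤ l i) ∧
      ∑ i, l i = 1 ∧ ∑ i, l i • a i = t • c := by
  constructor
  · rintro ⟨y, hy0, hyc⟩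
    set s := ∑ i, y i with hs
    have hs0 : 0 ≤ s := Finset.sum_nonneg fun i _ => hy0 i
    rcases eq_or_lt_of_le hs0 with h | h
    · exfalso
      apply hc
      rw [← hyc]
      apply Finset.sum_eq_zero
      intro i _
      have : y i = 0 := by
        have := (Finset.sum_eq_zero_iff_of_nonneg (fun i _ => hy0 i)).1 h.symm i (Finset.mem_univ i)
        exact this
      simp [this]
    · refine ⟨s⁻¹, fun i => y i / s, inv_pos.2 h, fun i => div_nonneg (hy0 i) hs0, ?_, ?_⟩
      · rw [← Finset.sum_div, ← hs, div_self (ne_of_gt h)]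
      · rw [← hyc]
        rw [Finset.smul_sum]
        apply Finset.sum_congr rfl
        intro i _
        show (y i / s) • a i = s⁻¹ • y i • a i
        rw [div_eq_inv_mul, mul_smul]
  · rintro ⟨t, l, ht, hl0, hl1, hlc⟩
    refine ⟨fun i => l i / t, fun i => div_nonneg (hl0 i) ht.le, ?_⟩
    have : ∑ i, (l i / t) • a i = t⁻¹ • ∑ i, l i • a i := by
      rw [Finset.smul_sum]
      apply Finset.sum_congr rfl
      intro i _
      show (l i / t) • a i = t⁻¹ • l i • a i
      rw [div_eq_inv_mul, mul_smul]
    rw [this, hlc, smul_smul, inv_mul_cancel₀ (ne_of_gt ht), one_smul]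

lemma mem_S_iff {c : E} {x : Fin n → E} (u : E) :
    u ∈ rayS c - convexHull ℝ (Set.range x) ↔
      ∃ (t : ℝ) (l : Fin n → ℝ), 0 < t ∧ (∀ i, 0 ≤ l i) ∧ ∑ i, l i = 1 ∧
        u = t • c - ∑ i, l i • x i := by
  rw [Set.mem_sub]
  constructor
  · rintro ⟨p, ⟨t, ht, rfl⟩, q, hq, rfl⟩
    rcases mem_hull_iff.1 hq with ⟨l, h0, h1, rfl⟩
    exact ⟨t, l, ht, h0, h1, rfl⟩
  · rintro ⟨t, l, ht, h0, h1, rfl⟩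
    exact ⟨t • c, ⟨t, ht, rfl⟩, ∑ i, l i • x i, sum_smul_mem_hull h0 h1, rfl⟩

lemma sum_smul_sub {z : E} {a : Fin n → E} {l : Fin n → ℝ} (h1 : ∑ i, l i = 1) :
    ∑ i, l i • (a i - z) = (∑ i, l i • a i) - z := by
  simp only [smul_sub, Finset.sum_sub_distrib, ← Finset.sum_smul, h1, one_smul]


lemma lemA {C : Set E} (hC : Convex ℝ C) {z : E} {r ε : ℝ} (hε : 0 ≤ ε)
    (h : ∀ u : E, dist u z < r → ∃ q ∈ C, dist q u ≤ ε) :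
    Metric.ball z (r - ε) ⊆ closure C := by
  intro p hp
  by_contra hpc
  obtain ⟨f, s, hfs, hsp⟩ := geometric_hahn_banach_closed_point hC.closure isClosed_closure hpc
  set v : E := (InnerProductSpace.toDual ℝ E).symm f with hv
  have hfv : ∀ w : E, f w = (inner ℝ v (w) : ℝ) := by
    intro w
    rw [hv, InnerProductSpace.toDual_symm_apply]
  have hd : dist p z < r - ε := Metric.mem_ball.1 hp
  have hdp : (0:ℝ) ≤ dist p z := dist_nonneg
  have hr : 0 < r := by linarith
  obtain ⟨q₀, hq₀C, _⟩ := h z (by simpa using hr)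
  have hvne : v ≠ 0 := by
    intro h0
    have h1 : f q₀ < s := hfs _ (subset_closure hq₀C)
    have h2 : s < f p := hsp
    rw [hfv, h0] at h1 h2
    simp at h1 h2
    linarith
  have hvn : 0 < ‖v‖ := norm_pos_iff.2 hvne
  set r₀ := (dist p z + ε + r) / 2 with hr₀
  have hr₀1 : dist p z + ε < r₀ := by rw [hr₀]; linarith
  have hr₀2 : r₀ < r := by rw [hr₀]; linarith
  have hr₀0 : 0 < r₀ := by rw [hr₀]; linarith
  set u := z + (r₀ / ‖v‖) • v with hu
  have hdu : dist u z < r := by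
    rw [hu, dist_eq_norm, add_sub_cancel_left, norm_smul, Real.norm_eq_abs,
      abs_of_pos (div_pos hr₀0 hvn), div_mul_cancel₀ _ (ne_of_gt hvn)]
    exact hr₀2
  obtain ⟨q, hqC, hqu⟩ := h u hdu
  have h1 : f q < s := hfs _ (subset_closure hqC)
  have h2 : s < f p := hsp
  rw [hfv] at h1 h2
  have e1 : (inner ℝ v (u) : ℝ) - (inner ℝ v (q) : ℝ) ≤ ‖v‖ * ε := by
    have : (inner ℝ v (u) : ℝ) - (inner ℝ v (q) : ℝ) = (inner ℝ v (u - q) : ℝ) := by rw [inner_sub_right]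
    rw [this]
    calc (inner ℝ v (u - q) : ℝ) ≤ ‖v‖ * ‖u - q‖ := real_inner_le_norm v (u - q)
      _ ≤ ‖v‖ * ε := by
          apply mul_le_mul_of_nonneg_left _ hvn.le
          rw [← dist_eq_norm, dist_comm]
          exact hqu
  have e2 : (inner ℝ v (u) : ℝ) = (inner ℝ v (z) : ℝ) + r₀ * ‖v‖ := by
    rw [hu, inner_add_right, inner_smul_right, real_inner_self_eq_norm_sq]
    field_simp
  have e3 : (inner ℝ v (p) : ℝ) - (inner ℝ v (z) : ℝ) ≤ ‖v‖ * dist p z := by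
    have : (inner ℝ v (p) : ℝ) - (inner ℝ v (z) : ℝ) = (inner ℝ v (p - z) : ℝ) := by rw [inner_sub_right]
    rw [this, dist_eq_norm]
    exact real_inner_le_norm v (p - z)
  nlinarith [mul_lt_mul_of_pos_left hr₀1 hvn]

lemma lemB {C : Set (EuclideanSpace ℝ (Fin d))} (hC : Convex ℝ C) {p : EuclideanSpace ℝ (Fin d)}
    {ρ : ℝ} (hρ : 0 < ρ) (h : Metric.ball p ρ ⊆ closure C) : p ∈ C := by
  have hspan : affineSpan ℝ C = ⊤ := by
    have h1 : Metric.ball p ρ ⊆ (affineSpan ℝ C : Set E) :=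
      h.trans (closure_minimal (subset_affineSpan ℝ C)
        (affineSpan ℝ C).closed_of_finiteDimensional)
    have h2 : affineSpan ℝ (Metric.ball p ρ) = ⊤ :=
      IsOpen.affineSpan_eq_top (P := EuclideanSpace ℝ (Fin d)) Metric.isOpen_ball (Metric.nonempty_ball.2 hρ)
    rw [eq_top_iff, ← h2]
    calc affineSpan ℝ (Metric.ball p ρ) ≤ affineSpan ℝ ((affineSpan ℝ C : Set E)) :=
          affineSpan_mono ℝ h1
      _ = affineSpan ℝ C := by rw [AffineSubspace.affineSpan_coe]
  obtain ⟨q, hq⟩ := (hC.interior_nonempty_iff_affineSpan_eq_top).2 hspan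
  set t := ρ / (ρ + 2 * dist p q) with hT
  have hden : 0 < ρ + 2 * dist p q := by positivity
  have ht : 0 < t := div_pos hρ hden
  have hp' : p + t • (p - q) ∈ Metric.ball p ρ := by
    rw [Metric.mem_ball, dist_eq_norm, add_sub_cancel_left, norm_smul, Real.norm_eq_abs,
      abs_of_pos ht, hT, div_mul_eq_mul_div, div_lt_iff₀ hden, ← dist_eq_norm]
    nlinarith [dist_nonneg (x := p) (y := q), hρ]
  have hcl : p + t • (p - q) ∈ closure C := h hp'
  have h1t : (0:ℝ) < 1 + t := by linarith
  have key : (t / (1 + t)) • q + (1 / (1 + t)) • (p + t • (p - q)) ∈ interior C := by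
    apply hC.combo_interior_closure_mem_interior hq hcl (div_pos ht h1t)
      (by positivity)
    rw [← add_div, add_comm t 1, div_self (ne_of_gt h1t)]
  have heq : (t / (1 + t)) • q + (1 / (1 + t)) • (p + t • (p - q)) = p := by
    have h1t' : (1:ℝ) + t ≠ 0 := ne_of_gt h1t
    match_scalars <;> field_simp <;> ring
  rw [heq] at key
  exact interior_subset key


lemma feas_iff_mem_S (hn : 0 < n) {a : Fin n → E} {c z : E}
    (hz : z = (n : ℝ)⁻¹ • ∑ i, a i) {x : Fin n → E} (hx : ∀ i, x i = a i - z)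
    (hc : c ≠ 0) :
    FeasDual a c ↔ z ∈ rayS c - convexHull ℝ (Set.range x) := by
  rw [feas_char hn hc, mem_S_iff]
  refine exists_congr fun t => exists_congr fun l => ?_
  constructor
  · rintro ⟨ht, h0, h1, h4⟩
    refine ⟨ht, h0, h1, ?_⟩
    have hxx : ∑ i, l i • x i = (∑ i, l i • a i) - z := by
      simp only [hx]; exact sum_smul_sub h1
    rw [hxx, h4]; abel
  · rintro ⟨ht, h0, h1, h4⟩
    refine ⟨ht, h0, h1, ?_⟩
    have hxx : ∑ i, l i • x i = (∑ i, l i • a i) - z := by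
      simp only [hx]; exact sum_smul_sub h1
    rw [hxx, eq_sub_iff_add_eq] at h4
    rw [← h4]; abel

lemma translate_feas (hn : 0 < n) {a : Fin n → E} {c z : E}
    (hz : z = (n : ℝ)⁻¹ • ∑ i, a i) {x : Fin n → E} (hx : ∀ i, x i = a i - z)
    (hc : c ≠ 0) (w : E) :
    FeasDual (fun i => a i + (w - z)) c ↔ w ∈ rayS c - convexHull ℝ (Set.range x) := by
  have hn' : (n:ℝ) ≠ 0 := Nat.cast_ne_zero.2 hn.ne'
  have hw : w = (n : ℝ)⁻¹ • ∑ i, (a i + (w - z)) := by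
    rw [Finset.sum_add_distrib, smul_add, ← hz, Finset.sum_const, Finset.card_univ,
      Fintype.card_fin, ← Nat.cast_smul_eq_nsmul ℝ, smul_smul, inv_mul_cancel₀ hn', one_smul]
    abel
  have hx' : ∀ i, x i = (a i + (w - z)) - w := by
    intro i; rw [hx]; abel
  exact feas_iff_mem_S hn hw hx' hc

lemma combo_eq (t₁ t₂ pw qw : ℝ) (l₁ l₂ : Fin n → ℝ) (cc : E) (v : Fin n → E) :
    (pw*t₁+qw*t₂) • cc - ∑ i, (pw*l₁ i+qw*l₂ i) • v i
      = pw • (t₁ • cc - ∑ i, l₁ i • v i) + qw • (t₂ • cc - ∑ i, l₂ i • v i) := by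
  simp only [add_smul, mul_smul, smul_sub, Finset.smul_sum, Finset.sum_add_distrib]
  abel


set_option maxHeartbeats 1000000 in
lemma main_core (hn : 0 < n) {a : Fin n → E} {c z : E} (hc : c ≠ 0)
    (hz : z = (n:ℝ)⁻¹ • ∑ i, a i) {x : Fin n → E} (hx : ∀ i, x i = a i - z)
    {R k₁ k₂ : ℝ} (haR : ∀ i, ‖a i‖ ≤ R) (hzR : ‖z‖ ≤ R) (hRpos : 0 < R)
    (hk₂ : k₂ = ‖c‖) (hk1pos : 0 < k₁)
    (hk₁ : k₁ = Metric.infDist z (frontier (rayS c - convexHull ℝ (Set.range x))))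
    (Δa : Fin n → E) (Δc : E)
    (hδm : Real.sqrt (∑ i, ‖Δa i‖^2) + ‖Δc‖ < min (k₁/8) (min (k₂/4) (k₁*k₂/(24*R)))) :
    (FeasDual (fun i => a i + Δa i) (c + Δc) ↔ FeasDual a c) := by
  have hn' : (n:ℝ) ≠ 0 := Nat.cast_ne_zero.2 hn.ne'
  have hk₂0 : 0 < k₂ := by rw [hk₂]; exact norm_pos_iff.2 hc
  set S := rayS c - convexHull ℝ (Set.range x) with hSdef
  set δ := Real.sqrt (∑ i, ‖Δa i‖ ^ 2) + ‖Δc‖ with hδdef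
  have hδ0 : 0 ≤ δ := add_nonneg (Real.sqrt_nonneg _) (norm_nonneg _)
  have hδ1 : δ < k₁/8 := lt_of_lt_of_le hδm (min_le_left _ _)
  have hδ2 : δ < k₂/4 := lt_of_lt_of_le hδm ((min_le_right _ _).trans (min_le_left _ _))
  have hδ3 : δ < k₁*k₂/(24*R) := lt_of_lt_of_le hδm ((min_le_right _ _).trans (min_le_right _ _))
  have hδa : ∀ i, ‖Δa i‖ ≤ δ := by
    intro i
    have h1 : ‖Δa i‖^2 ≤ ∑ j, ‖Δa j‖^2 :=
      Finset.single_le_sum (f := fun j => ‖Δa j‖^2) (fun j _ => by positivity) (Finset.mem_univ i)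
    have h2 : ‖Δa i‖ = Real.sqrt (‖Δa i‖^2) := (Real.sqrt_sq (norm_nonneg _)).symm
    rw [h2]
    exact le_add_of_le_of_nonneg (Real.sqrt_le_sqrt h1) (norm_nonneg _)
  have hδc : ‖Δc‖ ≤ δ := le_add_of_nonneg_left (Real.sqrt_nonneg _)
  set a' := fun i => a i + Δa i with ha'
  set z' := (n:ℝ)⁻¹ • ∑ i, a' i with hz'
  set x' := fun i => a' i - z' with hx'
  have hz'z : z' - z = (n:ℝ)⁻¹ • ∑ i, Δa i := by
    rw [hz', hz, ha']
    rw [Finset.sum_add_distrib, smul_add]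
    abel
  have hzz' : ‖z' - z‖ ≤ δ := by
    rw [hz'z, norm_smul, Real.norm_eq_abs, abs_of_nonneg (by positivity : (0:ℝ) ≤ (n:ℝ)⁻¹)]
    have h1 : ‖∑ i, Δa i‖ ≤ ∑ i : Fin n, δ :=
      (norm_sum_le _ _).trans (Finset.sum_le_sum fun i _ => hδa i)
    rw [Finset.sum_const, Finset.card_univ, Fintype.card_fin, nsmul_eq_mul] at h1
    calc (n:ℝ)⁻¹ * ‖∑ i, Δa i‖ ≤ (n:ℝ)⁻¹ * ((n:ℝ) * δ) := by
          apply mul_le_mul_of_nonneg_left h1 (by positivity)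
      _ = δ := by field_simp
  have hxx' : ∀ i, ‖x' i - x i‖ ≤ 2*δ := by
    intro i
    have he : x' i - x i = Δa i - (z' - z) := by
      rw [hx', hx, ha']
      simp only []
      abel
    rw [he]
    calc ‖Δa i - (z' - z)‖ ≤ ‖Δa i‖ + ‖z' - z‖ := norm_sub_le _ _
      _ ≤ 2*δ := by linarith [hδa i]
  have hcd : k₂ - δ ≤ ‖c + Δc‖ := by
    have : ‖c‖ ≤ ‖c + Δc‖ + ‖Δc‖ := by
      calc ‖c‖ = ‖(c + Δc) - Δc‖ := by congr 1; abel
        _ ≤ ‖c + Δc‖ + ‖Δc‖ := norm_sub_le _ _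
    rw [hk₂]; linarith [hδc]
  have hc' : c + Δc ≠ 0 := by
    intro h0
    rw [h0, norm_zero] at hcd
    linarith
  -- dichotomy for the ball
  have hzball : z ∈ Metric.ball z k₁ := Metric.mem_ball_self hk1pos
  have hbfr : ∀ w ∈ Metric.ball z k₁, w ∉ frontier S := by
    intro w hw hwf
    have h1 : Metric.infDist z (frontier S) ≤ dist z w := Metric.infDist_le_dist_of_mem hwf
    rw [← hk₁] at h1
    rw [Metric.mem_ball, dist_comm] at hw
    linarith
  have hcover : Metric.ball z k₁ ⊆ interior S ∪ interior Sᶜ := by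
    intro w hw
    by_cases h1 : w ∈ closure S
    · left
      by_contra h2
      exact hbfr w hw ⟨h1, h2⟩
    · right
      rw [interior_compl]
      exact h1
  have hdisj : Disjoint (interior S) (interior Sᶜ) := by
    rw [Set.disjoint_left]
    intro w hw hw'
    exact (interior_subset hw' : w ∈ Sᶜ) (interior_subset hw)
  by_cases hzS : z ∈ S
  · -- feasible case
    have hzint : z ∈ interior S := by
      rcases hcover hzball with h | h
      · exact h
      · exact absurd hzS (interior_subset h)
    have hballS : Metric.ball z k₁ ⊆ S :=
      ((convex_ball z k₁).isPreconnected.subset_left_of_subset_union isOpen_interior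
        isOpen_interior hdisj hcover ⟨z, hzball, hzint⟩).trans interior_subset
    have hfeas : FeasDual a c := (feas_iff_mem_S hn hz hx hc).2 hzS
    refine iff_of_true ?_ hfeas
    set ε := (3*R + k₁)/k₂ * δ + 3*δ with hεdef
    have hε0 : 0 ≤ ε := by
      have h1 : 0 ≤ (3*R + k₁)/k₂ := by positivity
      have h2 : 0 ≤ (3*R + k₁)/k₂*δ := mul_nonneg h1 hδ0
      rw [hεdef]
      linarith
    set C := {w : E | ∃ (t : ℝ) (l : Fin n → ℝ), 0 < t ∧ (∀ i, 0 ≤ l i) ∧ ∑ i, l i = 1 ∧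
      (t • c - ∑ i, l i • x i) ∈ Metric.ball z k₁ ∧ w = t • (c + Δc) - ∑ i, l i • x' i}
      with hCdef
    have hCconv : Convex ℝ C := by
      rintro w₁ ⟨t₁, l₁, ht₁, h₁0, h₁1, hb₁, rfl⟩ w₂ ⟨t₂, l₂, ht₂, h₂0, h₂1, hb₂, rfl⟩
        pw qw hpw hqw hpq
      refine ⟨pw*t₁ + qw*t₂, fun i => pw * l₁ i + qw * l₂ i, ?_,
        fun i => add_nonneg (mul_nonneg hpw (h₁0 i)) (mul_nonneg hqw (h₂0 i)), ?_, ?_, ?_⟩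
      · rcases eq_or_lt_of_le hpw with h | h
        · have hq1 : qw = 1 := by linarith
          rw [← h, hq1]; simpa using ht₂
        · have : 0 ≤ qw * t₂ := mul_nonneg hqw ht₂.le
          have : 0 < pw * t₁ := mul_pos h ht₁
          linarith
      · rw [Finset.sum_add_distrib, ← Finset.mul_sum, ← Finset.mul_sum, h₁1, h₂1]
        simpa using hpq
      · rw [combo_eq]
        exact (convex_ball z k₁) hb₁ hb₂ hpw hqw hpq
      · rw [combo_eq]
    have happrox : ∀ u : E, dist u z < k₁ → ∃ q ∈ C, dist q u ≤ ε := by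
      intro u hu
      have huS : u ∈ S := hballS (Metric.mem_ball.2 hu)
      obtain ⟨t, l, ht, hl0, hl1, hueq⟩ := (mem_S_iff u).1 huS
      refine ⟨t • (c + Δc) - ∑ i, l i • x' i,
        ⟨t, l, ht, hl0, hl1, by rw [← hueq]; exact Metric.mem_ball.2 hu, rfl⟩, ?_⟩
      have htb : t * k₂ ≤ 3*R + k₁ := by
        have h1 : t • c = u + ∑ i, l i • x i := by rw [hueq]; abel
        have h2 : ‖t • c‖ = t * k₂ := by
          rw [norm_smul, Real.norm_eq_abs, abs_of_pos ht, hk₂]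
        have hxR : ∀ i, ‖x i‖ ≤ 2*R := by
          intro i
          rw [hx]
          calc ‖a i - z‖ ≤ ‖a i‖ + ‖z‖ := norm_sub_le _ _
            _ ≤ 2*R := by linarith [haR i, hzR]
        have h3 : ‖u + ∑ i, l i • x i‖ ≤ ‖u‖ + 2*R :=
          (norm_add_le _ _).trans (by linarith [norm_combo_le hl0 hl1 hxR])
        have h4 : ‖u‖ ≤ ‖z‖ + k₁ := by
          calc ‖u‖ = ‖z + (u - z)‖ := by congr 1; abel
            _ ≤ ‖z‖ + ‖u - z‖ := norm_add_le _ _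
            _ ≤ ‖z‖ + k₁ := by
                rw [← dist_eq_norm]
                linarith [hu]
        rw [h1] at h2
        linarith [hzR, h2 ▸ h3]
      have ht' : t ≤ (3*R + k₁)/k₂ := (le_div_iff₀ hk₂0).2 htb
      have hdiff : (t • (c + Δc) - ∑ i, l i • x' i) - u
          = t • Δc - ∑ i, l i • (x' i - x i) := by
        rw [hueq]
        simp only [smul_add, smul_sub, Finset.sum_sub_distrib]
        abel
      rw [dist_eq_norm, hdiff]
      have h5 : ‖∑ i, l i • (x' i - x i)‖ ≤ 2*δ := norm_combo_le hl0 hl1 hxx'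
      have h6 : ‖t • Δc‖ ≤ (3*R + k₁)/k₂ * δ := by
        rw [norm_smul, Real.norm_eq_abs, abs_of_pos ht]
        calc t * ‖Δc‖ ≤ t * δ := mul_le_mul_of_nonneg_left hδc ht.le
          _ ≤ (3*R + k₁)/k₂ * δ := mul_le_mul_of_nonneg_right ht' hδ0
      calc ‖t • Δc - ∑ i, l i • (x' i - x i)‖
          ≤ ‖t • Δc‖ + ‖∑ i, l i • (x' i - x i)‖ := norm_sub_le _ _
        _ ≤ (3*R + k₁)/k₂ * δ + 2*δ := by linarith
        _ ≤ ε := by rw [hεdef]; linarith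
    have hsum : δ + ε < k₁ := by
      have e0 : (3*R + k₁)/k₂ * δ = 3*R/k₂*δ + k₁/k₂*δ := by ring
      have e1 : 3*R/k₂*δ < k₁/8 := by
        have h1 : 0 < 3*R/k₂ := by positivity
        have := mul_lt_mul_of_pos_left hδ3 h1
        calc 3*R/k₂*δ < 3*R/k₂ * (k₁*k₂/(24*R)) := this
          _ = k₁/8 := by field_simp; try ring
      have e2 : k₁/k₂*δ < k₁/4 := by
        have h1 : 0 < k₁/k₂ := by positivity
        have := mul_lt_mul_of_pos_left hδ2 h1
        calc k₁/k₂*δ < k₁/k₂ * (k₂/4) := this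
          _ = k₁/4 := by field_simp; try ring
      rw [hεdef, e0]
      linarith
    have hball1 : Metric.ball z (k₁ - ε) ⊆ closure C := lemA hCconv hε0 happrox
    have hρ : 0 < k₁ - ε - δ := by linarith
    have hball2 : Metric.ball z' (k₁ - ε - δ) ⊆ Metric.ball z (k₁ - ε) := by
      intro w hw
      rw [Metric.mem_ball] at hw ⊢
      have : dist z' z ≤ δ := by rw [dist_eq_norm]; exact hzz'
      calc dist w z ≤ dist w z' + dist z' z := dist_triangle _ _ _
        _ < (k₁ - ε - δ) + δ := by linarith
        _ = k₁ - ε := by ring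
    have hz'C : z' ∈ C := lemB hCconv hρ (fun w hw => hball1 (hball2 hw))
    obtain ⟨t, l, ht, hl0, hl1, _, hz'eq⟩ := hz'C
    have hxa : ∑ i, l i • x' i = (∑ i, l i • a' i) - z' := by
      simp only [hx']; exact sum_smul_sub hl1
    have hla : ∑ i, l i • a' i = t • (c + Δc) := by
      rw [hxa, eq_sub_iff_add_eq] at hz'eq
      rw [← hz'eq]; abel
    exact (feas_char hn hc').2 ⟨t, l, ht, hl0, hl1, hla⟩
  · -- infeasible case
    have hzint : z ∈ interior Sᶜ := by
      rcases hcover hzball with h | h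
      · exact absurd (interior_subset h) hzS
      · exact h
    have hballSc : Metric.ball z k₁ ⊆ interior Sᶜ :=
      (convex_ball z k₁).isPreconnected.subset_right_of_subset_union isOpen_interior
        isOpen_interior hdisj hcover ⟨z, hzball, hzint⟩
    have hfeas : ¬ FeasDual a c := fun h => hzS ((feas_iff_mem_S hn hz hx hc).1 h)
    refine iff_of_false ?_ hfeas
    intro hfe'
    obtain ⟨t, l, ht, hl0, hl1, hla⟩ := (feas_char hn hc').1 hfe'
    set w := t • c - ∑ i, l i • x i with hwdef
    have hwS : w ∈ S := (mem_S_iff w).2 ⟨t, l, ht, hl0, hl1, rfl⟩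
    have htb : t * (k₂ - δ) ≤ R + δ := by
      have ha'R : ∀ i, ‖a' i‖ ≤ R + δ := by
        intro i
        rw [ha']
        calc ‖a i + Δa i‖ ≤ ‖a i‖ + ‖Δa i‖ := norm_add_le _ _
          _ ≤ R + δ := by linarith [haR i, hδa i]
      have h1 : ‖∑ i, l i • a' i‖ ≤ R + δ := norm_combo_le hl0 hl1 ha'R
      rw [hla, norm_smul, Real.norm_eq_abs, abs_of_pos ht] at h1
      calc t * (k₂ - δ) ≤ t * ‖c + Δc‖ := mul_le_mul_of_nonneg_left hcd ht.le
        _ ≤ R + δ := h1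
    have hk2δ : 3/4*k₂ ≤ k₂ - δ := by linarith
    have ht' : t ≤ (R + δ)/(3/4*k₂) := by
      rw [le_div_iff₀ (by positivity)]
      calc t * (3/4*k₂) ≤ t * (k₂ - δ) := mul_le_mul_of_nonneg_left hk2δ ht.le
        _ ≤ R + δ := htb
    have hkey : w - z = ∑ i, l i • Δa i - t • Δc := by
      have e1 : ∑ i, l i • x i = (∑ i, l i • a i) - z := by
        simp only [hx]; exact sum_smul_sub hl1
      have e2 : ∑ i, l i • a' i = ∑ i, l i • a i + ∑ i, l i • Δa i := by
        rw [ha']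
        simp only [smul_add, Finset.sum_add_distrib]
      rw [e2] at hla
      have e3 : ∑ i, l i • a i = t • (c + Δc) - ∑ i, l i • Δa i := by
        rw [← hla]; abel
      rw [hwdef, e1, e3]
      simp only [smul_add]
      abel
    have hwz : ‖w - z‖ < k₁ := by
      rw [hkey]
      have h5 : ‖∑ i, l i • Δa i‖ ≤ δ := norm_combo_le hl0 hl1 hδa
      have h6 : ‖t • Δc‖ ≤ (R + δ)/(3/4*k₂) * δ := by
        rw [norm_smul, Real.norm_eq_abs, abs_of_pos ht]
        calc t * ‖Δc‖ ≤ t * δ := mul_le_mul_of_nonneg_left hδc ht.le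
          _ ≤ (R + δ)/(3/4*k₂) * δ := mul_le_mul_of_nonneg_right ht' hδ0
      have h7 : (R + δ)/(3/4*k₂) * δ = 4/3*(R*δ/k₂) + 4/3*(δ*δ/k₂) := by
        field_simp
      have h8 : R*δ/k₂ < k₁/24 := by
        have h1 : 0 < R/k₂ := by positivity
        have := mul_lt_mul_of_pos_left hδ3 h1
        calc R*δ/k₂ = R/k₂ * δ := by ring
          _ < R/k₂ * (k₁*k₂/(24*R)) := this
          _ = k₁/24 := by field_simp; try ring
      have h9 : δ*δ/k₂ ≤ δ/4 := by
        have hδk : δ/k₂ ≤ 1/4 := by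
          rw [div_le_div_iff₀ hk₂0 (by norm_num : (0:ℝ) < 4)]
          linarith
        calc δ*δ/k₂ = δ * (δ/k₂) := by ring
          _ ≤ δ * (1/4) := mul_le_mul_of_nonneg_left hδk hδ0
          _ = δ/4 := by ring
      calc ‖∑ i, l i • Δa i - t • Δc‖ ≤ ‖∑ i, l i • Δa i‖ + ‖t • Δc‖ := norm_sub_le _ _
        _ ≤ δ + ((R + δ)/(3/4*k₂) * δ) := by linarith
        _ < k₁ := by rw [h7]; linarith
    have hwball : w ∈ Metric.ball z k₁ := by
      rw [Metric.mem_ball, dist_eq_norm]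
      exact hwz
    exact (interior_subset (hballSc hwball) : w ∈ Sᶜ) hwS

end RhoAux

set_option maxHeartbeats 1000000 in
/-- Lemma (Reciprocal of distance to ill-posedness). -/
theorem reciprocal_rho_dual_bound {d n : ℕ} (hn : 0 < n)
    (a : Fin n → EuclideanSpace ℝ (Fin d))
    (c : EuclideanSpace ℝ (Fin d)) (hc : c ≠ 0)
    (z : EuclideanSpace ℝ (Fin d)) (hz : z = (n : ℝ)⁻¹ • ∑ i, a i)
    (x : Fin n → EuclideanSpace ℝ (Fin d)) (hx : ∀ i, x i = a i - z)
    (k₁ k₂ : ℝ)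
    (hk₁ : k₁ = Metric.infDist z (frontier (rayS c - convexHull ℝ (Set.range x))))
    (hk₂ : k₂ = ‖c‖) :
    1 / rhoDual a c ≤
      max (8 / k₁) (max (4 / k₂) (24 * (⨆ i, ‖a i‖) / (k₁ * k₂))) := by
  classical
  have hn' : (n:ℝ) ≠ 0 := Nat.cast_ne_zero.2 hn.ne'
  have hk₂0 : 0 < k₂ := by rw [hk₂]; exact norm_pos_iff.2 hc
  set S := rayS c - convexHull ℝ (Set.range x) with hSdef
  set R := ⨆ i, ‖a i‖ with hRdef
  have haR : ∀ i, ‖a i‖ ≤ R := fun i =>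
    le_ciSup (f := fun i => ‖a i‖) (Set.Finite.bddAbove (Set.finite_range _)) i
  have hR0 : 0 ≤ R := le_trans (norm_nonneg _) (haR ⟨0, hn⟩)
  have hzR : ‖z‖ ≤ R := by
    rw [hz, norm_smul, Real.norm_eq_abs, abs_of_nonneg (by positivity : (0:ℝ) ≤ (n:ℝ)⁻¹)]
    have h1 : ‖∑ i, a i‖ ≤ ∑ _i : Fin n, R :=
      (norm_sum_le _ _).trans (Finset.sum_le_sum fun i _ => haR i)
    rw [Finset.sum_const, Finset.card_univ, Fintype.card_fin, nsmul_eq_mul] at h1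
    calc (n:ℝ)⁻¹ * ‖∑ i, a i‖ ≤ (n:ℝ)⁻¹ * ((n:ℝ) * R) :=
          mul_le_mul_of_nonneg_left h1 (by positivity)
      _ = R := by field_simp
  have hk₁0 : 0 ≤ k₁ := hk₁ ▸ Metric.infDist_nonneg
  have hRHS0 : (0:ℝ) ≤ max (8/k₁) (max (4/k₂) (24*R/(k₁*k₂))) :=
    le_trans (div_nonneg (by norm_num) hk₂0.le) (le_max_of_le_right (le_max_left _ _))
  set Eset := {ε : ℝ | ∀ (Δa : Fin n → EuclideanSpace ℝ (Fin d))
      (Δc : EuclideanSpace ℝ (Fin d)),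
    Real.sqrt (∑ i, ‖Δa i‖ ^ 2) + ‖Δc‖ < ε →
    (FeasDual (fun i => a i + Δa i) (c + Δc) ↔ FeasDual a c)} with hEset
  have hrhoEq : rhoDual a c = sSup Eset := rfl
  rcases eq_or_lt_of_le hk₁0 with hk10 | hk1pos
  · -- degenerate case: k₁ = 0, show rhoDual ≤ 0
    have hrho : rhoDual a c ≤ 0 := by
      rw [hrhoEq]
      apply Real.sSup_nonpos
      intro ε hε
      simp only [hEset, Set.mem_setOf_eq] at hε
      by_contra hposc
      push_neg at hposc
      have hpos : 0 < ε := hposc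
      have hSne : S.Nonempty := by
        refine ⟨c - x ⟨0, hn⟩, (RhoAux.mem_S_iff _).2
          ⟨1, fun i => if i = ⟨0, hn⟩ then 1 else 0, one_pos,
            fun i => by positivity, by simp, ?_⟩⟩
        rw [one_smul]
        congr 1
        simp [ite_smul]
      have hxR : ∀ i, ‖x i‖ ≤ 2*R := fun i => by
        rw [hx]
        calc ‖a i - z‖ ≤ ‖a i‖ + ‖z‖ := norm_sub_le _ _
          _ ≤ 2*R := by linarith [haR i]
      have hScne : Sᶜ.Nonempty := by
        refine ⟨-((2*R + k₂)/k₂) • c, fun hmem => ?_⟩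
        obtain ⟨t, l, ht, hl0, hl1, heq⟩ := (RhoAux.mem_S_iff _).1 hmem
        have h1 : ‖∑ i, l i • x i‖ ≤ 2*R := RhoAux.norm_combo_le hl0 hl1 hxR
        have h' : -((2*R + k₂)/k₂) • c + ∑ i, l i • x i = t • c := eq_sub_iff_add_eq.1 heq
        have h'' : ∑ i, l i • x i = t • c - (-((2*R + k₂)/k₂) • c) := by
          rw [eq_sub_iff_add_eq, add_comm]; exact h'
        have h2 : ∑ i, l i • x i = (t + (2*R + k₂)/k₂) • c := by
          rw [h'', neg_smul, sub_neg_eq_add, add_smul]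
        have hM : 0 < (2*R + k₂)/k₂ := div_pos (by linarith) hk₂0
        rw [h2, norm_smul, Real.norm_eq_abs, abs_of_pos (by linarith), ← hk₂] at h1
        have hMk : (2*R + k₂)/k₂ * k₂ = 2*R + k₂ := by field_simp
        nlinarith
      have hfr : (frontier S).Nonempty := by
        rw [Set.nonempty_iff_ne_empty]
        intro h
        rcases isClopen_iff.1 (isClopen_iff_frontier_eq_empty.2 h) with h1 | h1
        · exact hSne.ne_empty h1
        · exact hScne.ne_empty (by rw [h1, Set.compl_univ])
      have hzfr : z ∈ frontier S := by
        rw [isClosed_frontier.mem_iff_infDist_zero hfr]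
        rw [← hk₁, ← hk10]
      rw [frontier_eq_closure_inter_closure] at hzfr
      set η := ε / (2 * (Real.sqrt n + 1)) with hη
      have hsn : 0 ≤ Real.sqrt n := Real.sqrt_nonneg _
      have hηpos : 0 < η := by rw [hη]; positivity
      have hsize : ∀ w : EuclideanSpace ℝ (Fin d), dist z w < η →
          Real.sqrt (∑ _i : Fin n, ‖w - z‖^2) + ‖(0:EuclideanSpace ℝ (Fin d))‖ < ε := by
        intro w hwd
        rw [norm_zero, add_zero, Finset.sum_const, Finset.card_univ, Fintype.card_fin,
          nsmul_eq_mul, Real.sqrt_mul (Nat.cast_nonneg n), Real.sqrt_sq (norm_nonneg _)]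
        have hwz : ‖w - z‖ < η := by rw [← dist_eq_norm, dist_comm]; exact hwd
        have hkey : Real.sqrt n * η < ε := by
          have h2 : Real.sqrt n/(2*(Real.sqrt n+1)) < 1 := by
            rw [div_lt_one (by positivity)]
            linarith
          calc Real.sqrt n * η = ε * (Real.sqrt n/(2*(Real.sqrt n+1))) := by
                rw [hη]; ring
            _ < ε * 1 := mul_lt_mul_of_pos_left h2 hpos
            _ = ε := mul_one ε
        have := mul_le_mul_of_nonneg_left hwz.le hsn
        linarith
      by_cases hfe : FeasDual a c
      · have hzc : z ∈ closure Sᶜ := hzfr.2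
        obtain ⟨w, hwSc, hwd⟩ := Metric.mem_closure_iff.1 hzc η hηpos
        have hiff := hε (fun _ => w - z) 0 (hsize w hwd)
        rw [add_zero] at hiff
        have h2 := RhoAux.translate_feas hn hz hx hc w
        exact hwSc (h2.1 (hiff.2 hfe))
      · have hzc : z ∈ closure S := hzfr.1
        obtain ⟨w, hwS, hwd⟩ := Metric.mem_closure_iff.1 hzc η hηpos
        have hiff := hε (fun _ => w - z) 0 (hsize w hwd)
        rw [add_zero] at hiff
        have h2 := RhoAux.translate_feas hn hz hx hc w
        exact hfe (hiff.1 (h2.2 hwS))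
    exact le_trans (one_div_nonpos.2 hrho) hRHS0
  · -- main case: k₁ > 0
    have hRpos : 0 < R := by
      rcases eq_or_lt_of_le hR0 with h | h
      · exfalso
        have ha0 : ∀ i, a i = 0 := fun i =>
          norm_eq_zero.1 (le_antisymm (h ▸ haR i) (norm_nonneg _))
        have hz0 : z = 0 := by rw [hz]; simp [ha0]
        have hx0 : ∀ i, x i = 0 := fun i => by rw [hx, ha0, hz0, sub_zero]
        have h0S : (0:EuclideanSpace ℝ (Fin d)) ∉ S := by
          intro hmem
          obtain ⟨t, l, ht, hl0, hl1, heq⟩ := (RhoAux.mem_S_iff _).1 hmem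
          have hs0 : ∑ i, l i • x i = 0 := by simp [hx0]
          rw [hs0, sub_zero] at heq
          rcases smul_eq_zero.1 heq.symm with h' | h'
          · exact ht.ne' h'
          · exact hc h'
        have h0cl : (0:EuclideanSpace ℝ (Fin d)) ∈ closure S := by
          rw [Metric.mem_closure_iff]
          intro ε' hε'
          have hq : 0 < ε'/(2*k₂) := div_pos hε' (by linarith)
          refine ⟨(ε'/(2*k₂)) • c, (RhoAux.mem_S_iff _).2
            ⟨ε'/(2*k₂), fun _ => (n:ℝ)⁻¹, hq, fun i => by positivity, ?_, ?_⟩, ?_⟩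
          · rw [Finset.sum_const, Finset.card_univ, Fintype.card_fin, nsmul_eq_mul,
              mul_inv_cancel₀ hn']
          · simp [hx0]
          · rw [dist_eq_norm, zero_sub, norm_neg, norm_smul, Real.norm_eq_abs,
              abs_of_pos hq, ← hk₂]
            have : ε'/(2*k₂) * k₂ = ε'/2 := by field_simp
            rw [this]
            linarith
        have h0fr : (0:EuclideanSpace ℝ (Fin d)) ∈ frontier S :=
          ⟨h0cl, fun h2 => h0S (interior_subset h2)⟩
        have hle : k₁ ≤ 0 := by
          rw [hk₁, hz0]
          exact le_of_eq (Metric.infDist_zero_of_mem h0fr)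
        linarith
      · exact h
    set m := min (k₁/8) (min (k₂/4) (k₁*k₂/(24*R))) with hm
    have hmpos : 0 < m := lt_min (div_pos hk1pos (by norm_num))
      (lt_min (div_pos hk₂0 (by norm_num))
        (div_pos (mul_pos hk1pos hk₂0) (mul_pos (by norm_num) hRpos)))
    have hbdd : BddAbove Eset := by
      refine ⟨Real.sqrt (∑ i, ‖c - a i‖^2) + (Real.sqrt (∑ i, ‖a i‖^2) + 1), ?_⟩
      rintro ε hε
      simp only [hEset, Set.mem_setOf_eq] at hε
      by_contra hlt
      push_neg at hlt
      have hs1 : (0:ℝ) ≤ Real.sqrt (∑ i, ‖a i‖^2) := Real.sqrt_nonneg _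
      have hs2 : (0:ℝ) ≤ Real.sqrt (∑ i, ‖c - a i‖^2) := Real.sqrt_nonneg _
      have h1 := hε (fun i => c - a i) 0 (by rw [norm_zero, add_zero]; linarith)
      have h2 := hε (fun i => - a i) 0
        (by rw [norm_zero, add_zero]; simp only [norm_neg]; linarith)
      rw [add_zero] at h1 h2
      have hfe1 : FeasDual (fun i => a i + (c - a i)) c := by
        refine ⟨fun i => if i = ⟨0,hn⟩ then 1 else 0, fun i => by positivity, ?_⟩
        simp [ite_smul]
      have hfe2 : ¬ FeasDual (fun i => a i + (- a i)) c := by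
        rintro ⟨y, hy0, hyc⟩
        apply hc
        rw [← hyc]
        apply Finset.sum_eq_zero
        intro i _
        simp
      exact hfe2 (h2.2 (h1.1 hfe1))
    have hmem : m ∈ Eset := by
      simp only [hEset, Set.mem_setOf_eq]
      intro Δa Δc hlt
      exact RhoAux.main_core hn hc hz hx haR hzR hRpos hk₂ hk1pos hk₁ Δa Δc hlt
    have hrho_ge : m ≤ rhoDual a c := by
      rw [hrhoEq]
      exact le_csSup hbdd hmem
    have h1m : 1 / rhoDual a c ≤ 1 / m := one_div_le_one_div_of_le hmpos hrho_ge
    apply le_trans h1m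
    rcases min_cases (k₁/8) (min (k₂/4) (k₁*k₂/(24*R))) with ⟨he, _⟩ | ⟨he, _⟩
    · rw [hm, he, one_div_div]
      exact le_max_left _ _
    · rcases min_cases (k₂/4) (k₁*k₂/(24*R)) with ⟨he2, _⟩ | ⟨he2, _⟩
      · rw [hm, he, he2, one_div_div]
        exact le_max_of_le_right (le_max_left _ _)
      · rw [hm, he, he2, one_div_div]
        exact le_max_of_le_right (le_max_right _ _)
end

section
/- Let c, x₁,...,xₙ, z ∈ R^d with dist(z, ∂(ray(c) - hull(x₁,...,xₙ))) > α for some α > 0. Suppose ‖Δxᵢ‖ ≤ α/4 for all i, ‖Δz‖ ≤ α/4, and ‖Δc‖ ≤ α‖c‖/(2α + 4(‖z‖ + maxᵢ‖xᵢ‖)). Then z + Δz is not on the boundary of ray(c + Δc) - hull(x₁ + Δx₁, ..., xₙ + Δxₙ). -/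
open Pointwise

set_option maxHeartbeats 2000000 in
/-- Lemma (Geometric condition to be far from ill-posedness in new variables). -/
theorem far_from_ill_posedness_new_variables {d n : ℕ} (hn : 0 < n)
    (c z : EuclideanSpace ℝ (Fin d)) (hc : c ≠ 0)
    (x : Fin n → EuclideanSpace ℝ (Fin d))
    (α : ℝ) (hα : 0 < α)
    (hfar : α < Metric.infDist z (frontier (rayS c - convexHull ℝ (Set.range x))))
    (Δc Δz : EuclideanSpace ℝ (Fin d)) (Δx : Fin n → EuclideanSpace ℝ (Fin d))
    (hΔx : ∀ i, ‖Δx i‖ ≤ α / 4) (hΔz : ‖Δz‖ ≤ α / 4)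
    (hΔc : ‖Δc‖ ≤ α * ‖c‖ / (2 * α + 4 * (‖z‖ + ⨆ i, ‖x i‖))) :
    z + Δz ∉
      frontier (rayS (c + Δc) - convexHull ℝ (Set.range fun i => x i + Δx i)) := by
  intro hzf
  classical
  set x' : Fin n → EuclideanSpace ℝ (Fin d) := fun i => x i + Δx i with hx'def
  set c' : EuclideanSpace ℝ (Fin d) := c + Δc with hc'def
  set S : Set (EuclideanSpace ℝ (Fin d)) := rayS c - convexHull ℝ (Set.range x) with hSdef
  set S' : Set (EuclideanSpace ℝ (Fin d)) := rayS c' - convexHull ℝ (Set.range x') with hS'def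
  set M := ⨆ i, ‖x i‖ with hMdef
  set B := ‖z‖ + M with hBdef
  have hnen : Nonempty (Fin n) := ⟨⟨0, hn⟩⟩
  have hxM : ∀ i, ‖x i‖ ≤ M := by
    intro i; rw [hMdef]
    exact le_ciSup (f := fun i => ‖x i‖) (Set.Finite.bddAbove (Set.finite_range _)) i
  have hM0 : 0 ≤ M := le_trans (norm_nonneg _) (hxM ⟨0, hn⟩)
  have hB0 : 0 ≤ B := add_nonneg (norm_nonneg z) hM0
  have hcn : (0:ℝ) < ‖c‖ := norm_pos_iff.mpr hc
  have hden : (0:ℝ) < 2*α + 4*B := by linarith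
  have hΔc2 : ‖Δc‖ ≤ ‖c‖ / 2 := by
    refine hΔc.trans ?_
    rw [div_le_div_iff₀ hden (by norm_num)]
    nlinarith
  have hc'low : ‖c‖ / 2 ≤ ‖c'‖ := by
    have h1 : ‖c‖ ≤ ‖c'‖ + ‖Δc‖ := by
      have : c = c' - Δc := by rw [hc'def]; abel
      calc ‖c‖ = ‖c' - Δc‖ := by rw [← this]
        _ ≤ ‖c'‖ + ‖Δc‖ := norm_sub_le _ _
    linarith
  have hc'n : (0:ℝ) < ‖c'‖ := lt_of_lt_of_le (by linarith) hc'low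
  have hc'0 : c' ≠ 0 := norm_pos_iff.mp hc'n
  -- the radius r and margin δ
  set r := (α + Metric.infDist z (frontier S)) / 2 with hrdef
  have hαr : α < r := by rw [hrdef]; linarith
  have hr0 : 0 < r := lt_trans hα hαr
  have hrI : r < Metric.infDist z (frontier S) := by rw [hrdef]; linarith
  set δ := (r - α) / 4 with hδdef
  have hδ0 : 0 < δ := by rw [hδdef]; linarith
  clear_value r δ
  -- bounds on hulls
  have hhull_bound : ∀ (v : Fin n → EuclideanSpace ℝ (Fin d)) (K : ℝ), (∀ i, ‖v i‖ ≤ K) →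
      ∀ p ∈ convexHull ℝ (Set.range v), ‖p‖ ≤ K := by
    intro v K hv p hp
    have hsub : convexHull ℝ (Set.range v) ⊆ Metric.closedBall 0 K := by
      apply convexHull_min ?_ (convex_closedBall 0 K)
      rintro y ⟨i, rfl⟩
      simpa [Metric.mem_closedBall, dist_zero_right] using hv i
    simpa [Metric.mem_closedBall, dist_zero_right] using hsub hp
  have hx'M : ∀ i, ‖x' i‖ ≤ M + α/4 := by
    intro i
    calc ‖x' i‖ = ‖x i + Δx i‖ := rfl
      _ ≤ ‖x i‖ + ‖Δx i‖ := norm_add_le _ _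
      _ ≤ M + α/4 := add_le_add (hxM i) (hΔx i)
  -- transfer between hulls
  have transfer : ∀ u v : Fin n → EuclideanSpace ℝ (Fin d), (∀ i, ‖u i - v i‖ ≤ α / 4) →
      ∀ p ∈ convexHull ℝ (Set.range u), ∃ q ∈ convexHull ℝ (Set.range v), ‖p - q‖ ≤ α / 4 := by
    intro u v huv p hp
    rw [convexHull_range_eq_exists_affineCombination] at hp
    obtain ⟨s, w, hw0, hw1, hps⟩ := hp
    rw [Finset.affineCombination_eq_linear_combination _ _ _ hw1] at hps
    refine ⟨∑ i ∈ s, w i • v i, ?_, ?_⟩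
    · have := Finset.centerMass_mem_convexHull (R := ℝ) s hw0 (by rw [hw1]; norm_num)
        (fun i _ => Set.mem_range_self (f := v) i)
      rwa [Finset.centerMass_eq_of_sum_1 _ _ hw1] at this
    · have heq : p - ∑ i ∈ s, w i • v i = ∑ i ∈ s, w i • (u i - v i) := by
        rw [← hps]
        simp [smul_sub, Finset.sum_sub_distrib]
      rw [heq]
      calc ‖∑ i ∈ s, w i • (u i - v i)‖ ≤ ∑ i ∈ s, ‖w i • (u i - v i)‖ := norm_sum_le _ _
        _ ≤ ∑ i ∈ s, w i * (α / 4) := by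
            apply Finset.sum_le_sum
            intro i hi
            rw [norm_smul, Real.norm_eq_abs, abs_of_nonneg (hw0 i hi)]
            exact mul_le_mul_of_nonneg_left (huv i) (hw0 i hi)
        _ = α / 4 := by rw [← Finset.sum_mul, hw1, one_mul]
  have hdiff : ∀ i, ‖x' i - x i‖ ≤ α / 4 := by
    intro i
    have h : x' i - x i = Δx i := by simp [hx'def]
    rw [h]; exact hΔx i
  have hdiff2 : ∀ i, ‖x i - x' i‖ ≤ α / 4 := by
    intro i; rw [norm_sub_rev]; exact hdiff i
  -- the closed convex set D ⊇ closure S'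
  set A : Set (EuclideanSpace ℝ (Fin d)) := (fun t : ℝ => t • c') '' Set.Ici 0 with hAdef
  set D : Set (EuclideanSpace ℝ (Fin d)) := A - convexHull ℝ (Set.range x') with hDdef
  have hHcpt : IsCompact (convexHull ℝ (Set.range x')) := (Set.finite_range x').isCompact_convexHull ℝ
  have hAclosed : IsClosed A := (isClosedEmbedding_smul_left hc'0).isClosedMap _ isClosed_Ici
  have hDclosed : IsClosed D := by
    have heq : D = (-(convexHull ℝ (Set.range x'))) + A := by
      ext y
      simp only [hDdef, Set.mem_sub, Set.mem_add, Set.mem_neg]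
      constructor
      · rintro ⟨a, ha, b, hb, rfl⟩; exact ⟨-b, by simpa using hb, a, ha, by abel⟩
      · rintro ⟨a, ha, b, hb, rfl⟩; exact ⟨b, hb, -a, by simpa using ha, by abel⟩
    rw [heq]
    exact IsClosed.add_left_of_isCompact hAclosed hHcpt.neg
  have hDconvex : Convex ℝ D := by
    have hA : Convex ℝ A := by
      have := (convex_Ici (0:ℝ)).linear_image (LinearMap.toSpanSingleton ℝ _ c')
      simpa [hAdef, LinearMap.toSpanSingleton_apply] using this
    exact hA.sub (convex_convexHull ℝ _)
  have hmemD : ∀ (t : ℝ), 0 ≤ t → ∀ q' ∈ convexHull ℝ (Set.range x'), t • c' - q' ∈ D :=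
    fun t ht q' hq' => Set.mem_sub.2 ⟨t • c', ⟨t, ht, rfl⟩, q', hq', rfl⟩
  have hS'subD : S' ⊆ D := by
    rintro y hy
    rw [hS'def, Set.mem_sub] at hy
    obtain ⟨a, ⟨β, hβ, ha⟩, q, hq, rfl⟩ := hy
    subst ha
    exact hmemD β hβ.le q hq
  have hclosS'D : closure S' ⊆ D := hDclosed.closure_subset_iff.2 hS'subD
  -- cone points are in the closure of S
  have coneclos : ∀ β : ℝ, 0 ≤ β → ∀ p ∈ convexHull ℝ (Set.range x), β • c - p ∈ closure S := by
    intro β hβ p hp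
    have htend : Filter.Tendsto (fun ε : ℝ => (β + ε) • c - p)
        (nhdsWithin 0 (Set.Ioi 0)) (nhds (β • c - p)) := by
      have h : Filter.Tendsto (fun ε : ℝ => (β + ε) • c - p) (nhds 0) (nhds ((β + 0) • c - p)) := by
        apply Filter.Tendsto.sub_const
        exact ((continuous_const.add continuous_id).smul continuous_const).tendsto 0
      simpa using h.mono_left nhdsWithin_le_nhds
    refine mem_closure_of_tendsto htend ?_
    filter_upwards [self_mem_nhdsWithin] with ε hε
    have hε' : (0:ℝ) < ε := hε
    exact Set.mem_sub.2 ⟨(β + ε) • c, ⟨β + ε, by linarith, rfl⟩, p, hp, rfl⟩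
  -- Step 3: the ball around z lies in the interior of S
  have hzD : z + Δz ∈ D := hclosS'D (frontier_subset_closure hzf)
  obtain ⟨a, ⟨β, hβ0, ha⟩, q, hq, hzeq⟩ := Set.mem_sub.1 hzD
  subst ha
  have hβ0 : (0:ℝ) ≤ β := hβ0
  obtain ⟨p, hp, hqp⟩ := transfer x' x hdiff q hq
  have hqM : ‖q‖ ≤ M + α/4 := hhull_bound x' (M + α/4) hx'M q hq
  have hβb : β * ‖c‖ ≤ 2*B + α := by
    have h1 : β * ‖c'‖ = ‖β • c'‖ := by
      rw [norm_smul, Real.norm_eq_abs, abs_of_nonneg hβ0]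
    have h2 : β • c' = (z + Δz) + q := by rw [← hzeq]; abel
    have h3 : ‖(z + Δz) + q‖ ≤ ‖z‖ + ‖Δz‖ + ‖q‖ := norm_add₃_le
    have h4 : β * ‖c'‖ ≤ B + α/2 := by
      rw [h1, h2]
      calc ‖(z + Δz) + q‖ ≤ ‖z‖ + ‖Δz‖ + ‖q‖ := h3
        _ ≤ ‖z‖ + α/4 + (M + α/4) := by linarith [hΔz, hqM]
        _ = B + α/2 := by rw [hBdef]; ring
    have h5 : β * (‖c‖/2) ≤ β * ‖c'‖ := mul_le_mul_of_nonneg_left hc'low hβ0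
    have h6 : β * (‖c‖/2) = (β * ‖c‖)/2 := by ring
    linarith
  have hβΔc : β * ‖Δc‖ ≤ α / 2 := by
    have h3 : β * ‖Δc‖ ≤ β * (α * ‖c‖ / (2*α + 4*B)) :=
      mul_le_mul_of_nonneg_left hΔc hβ0
    have h4 : β * (α * ‖c‖ / (2*α + 4*B)) ≤ α/2 := by
      rw [mul_div_assoc', div_le_iff₀ hden]
      nlinarith [hβb, hα]
    linarith
  set u := β • c - p with hudef
  have huclos : u ∈ closure S := coneclos β hβ0 p hp
  have huz : ‖u - z‖ ≤ α := by
    have hzv : z = β • c + β • Δc - q - Δz := by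
      have h := hzeq
      simp only [hc'def, smul_add] at h
      rw [eq_sub_iff_add_eq, ← h]
    have huz_eq : u - z = (q - p) + Δz - β • Δc := by
      rw [hudef, hzv]; abel
    rw [huz_eq]
    have hβΔcn : ‖β • Δc‖ = β * ‖Δc‖ := by
      rw [norm_smul, Real.norm_eq_abs, abs_of_nonneg hβ0]
    calc ‖(q - p) + Δz - β • Δc‖ ≤ ‖(q - p) + Δz‖ + ‖β • Δc‖ := norm_sub_le _ _
      _ ≤ ‖q - p‖ + ‖Δz‖ + ‖β • Δc‖ := by
          have := norm_add_le (q - p) Δz; linarith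
      _ ≤ α/4 + α/4 + α/2 := by rw [hβΔcn]; exact add_le_add (add_le_add hqp hΔz) hβΔc
      _ = α := by ring
  have hufr : u ∉ frontier S := by
    intro hu
    have h1 := Metric.infDist_le_dist_of_mem (x := z) hu
    rw [dist_eq_norm, norm_sub_rev] at h1
    linarith
  have huint : u ∈ interior S := by
    have h1 : u ∈ interior S ∪ frontier S := by
      rw [← closure_eq_interior_union_frontier]; exact huclos
    rcases h1 with h | h
    · exact h
    · exact absurd h hufr
  have hball : Metric.ball z r ⊆ interior S := by
    have hcover : Metric.ball z r ⊆ interior S ∪ (closure S)ᶜ := by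
      intro y hy
      by_contra hyn
      simp only [Set.mem_union, Set.mem_compl_iff, not_or, not_not] at hyn
      have hyf : y ∈ frontier S := by
        rw [← closure_diff_interior]; exact ⟨hyn.2, hyn.1⟩
      have h1 := Metric.infDist_le_dist_of_mem (x := z) hyf
      rw [Metric.mem_ball] at hy
      rw [dist_comm] at h1
      linarith
    refine IsPreconnected.subset_left_of_subset_union isOpen_interior
      isClosed_closure.isOpen_compl ?_ hcover ⟨u, ?_, huint⟩ (convex_ball z r).isPreconnected
    · rw [Set.disjoint_left]
      intro a ha h
      exact h (subset_closure (interior_subset ha))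
    · rw [Metric.mem_ball, dist_eq_norm]
      exact lt_of_le_of_lt huz hαr
  -- Step 4: closed ball around z + Δz is inside D
  have hkeyD : ∀ w, dist w (z + Δz) ≤ δ → w ∈ D := by
    intro w hw
    by_contra hwD
    obtain ⟨f, sep, hsepD, hsepw⟩ := geometric_hahn_banach_closed_point hDconvex hDclosed hwD
    have hx'0 : x' ⟨0, hn⟩ ∈ convexHull ℝ (Set.range x') :=
      subset_convexHull ℝ _ ⟨⟨0, hn⟩, rfl⟩
    have hf0 : f ≠ 0 := by
      intro h
      have h1 := hsepD _ (hmemD 0 le_rfl _ hx'0)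
      rw [h] at h1 hsepw
      simp at h1 hsepw
      linarith
    have hF : 0 < ‖f‖ := norm_pos_iff.mpr hf0
    have hfc' : f c' ≤ 0 := by
      by_contra h
      push_neg at h
      set t0 := max 0 ((sep + f (x' ⟨0, hn⟩)) / f c') + 1 with ht0def
      have ht00 : 0 ≤ t0 := by
        have := le_max_left 0 ((sep + f (x' ⟨0, hn⟩)) / f c')
        rw [ht0def]; linarith
      have h1 := hsepD _ (hmemD t0 ht00 _ hx'0)
      rw [map_sub, map_smul, smul_eq_mul] at h1
      have h2 : (sep + f (x' ⟨0, hn⟩)) / f c' < t0 := by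
        have := le_max_right 0 ((sep + f (x' ⟨0, hn⟩)) / f c')
        rw [ht0def]; linarith
      rw [div_lt_iff₀ h] at h2
      linarith
    set η := ‖f‖ * δ / (2 * r) with hηdef
    have hη0 : 0 < η := by rw [hηdef]; positivity
    clear_value η
    obtain ⟨v0, hv0n, hv0f⟩ := f.exists_lt_apply_of_lt_opNorm (show ‖f‖ - η < ‖f‖ by linarith)
    obtain ⟨v, hvn, hvf⟩ : ∃ v : EuclideanSpace ℝ (Fin d), ‖v‖ ≤ 1 ∧ ‖f‖ - η < f v := by
      rcases le_or_gt 0 (f v0) with h | h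
      · exact ⟨v0, hv0n.le, by rwa [Real.norm_eq_abs, abs_of_nonneg h] at hv0f⟩
      · refine ⟨-v0, by simpa using hv0n.le, ?_⟩
        rw [map_neg]
        rwa [Real.norm_eq_abs, abs_of_neg h] at hv0f
    set t := r - δ with htdef
    have hαt : α < t := by rw [htdef, hδdef]; linarith
    have ht0 : 0 < t := lt_trans hα hαt
    have htr : t < r := by rw [htdef]; linarith
    clear_value t
    set ut := z + t • v with hutdef
    have hutv : ut - z = t • v := by rw [hutdef]; abel
    have htvn : ‖t • v‖ ≤ t := by
      rw [norm_smul, Real.norm_eq_abs, abs_of_pos ht0]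
      nlinarith
    have hutb : ut ∈ Metric.ball z r := by
      rw [Metric.mem_ball, dist_eq_norm, hutv]
      exact lt_of_le_of_lt htvn htr
    have hutS : ut ∈ S := interior_subset (hball hutb)
    rw [hSdef, Set.mem_sub] at hutS
    obtain ⟨a, ⟨γ, hγ0, ha⟩, p2, hp2, hueq⟩ := hutS
    subst ha
    have hp2M : ‖p2‖ ≤ M := hhull_bound x M hxM p2 hp2
    have hγb : γ * ‖c‖ ≤ B + t := by
      have h1 : γ * ‖c‖ = ‖γ • c‖ := by
        rw [norm_smul, Real.norm_eq_abs, abs_of_nonneg hγ0.le]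
      have h2 : γ • c = ut + p2 := by rw [← hueq]; abel
      have h3 : ‖ut + p2‖ ≤ ‖z‖ + ‖t • v‖ + ‖p2‖ := by
        calc ‖ut + p2‖ = ‖z + t • v + p2‖ := by rw [hutdef]
          _ ≤ ‖z‖ + ‖t • v‖ + ‖p2‖ := norm_add₃_le
      rw [h1, h2]
      calc ‖ut + p2‖ ≤ ‖z‖ + ‖t • v‖ + ‖p2‖ := h3
        _ ≤ ‖z‖ + t + M := by linarith [htvn, hp2M]
        _ = B + t := by rw [hBdef]; ring
    have hfc : f c ≤ ‖f‖ * ‖Δc‖ := by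
      have h1 : f c = f c' - f Δc := by rw [hc'def, map_add]; ring
      have h2 := f.le_opNorm Δc
      rw [Real.norm_eq_abs] at h2
      have h3 := abs_le.1 h2
      linarith [hfc']
    have hγfc : γ * f c ≤ ‖f‖ * (t / 2) := by
      have h1 : γ * f c ≤ γ * (‖f‖ * ‖Δc‖) := mul_le_mul_of_nonneg_left hfc hγ0.le
      have h2 : γ * ‖Δc‖ ≤ t / 2 := by
        have h3 : γ * ‖Δc‖ ≤ γ * (α * ‖c‖ / (2*α + 4*B)) :=
          mul_le_mul_of_nonneg_left hΔc hγ0.le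
        have h4 : γ * (α * ‖c‖ / (2*α + 4*B)) ≤ t/2 := by
          rw [mul_div_assoc', div_le_iff₀ hden]
          nlinarith [hγb, hα, hαt, hB0]
        linarith
      have h5 : γ * (‖f‖ * ‖Δc‖) = ‖f‖ * (γ * ‖Δc‖) := by ring
      rw [h5] at h1
      exact h1.trans (mul_le_mul_of_nonneg_left h2 (norm_nonneg f))
    have hfp : -(f p2) < sep + ‖f‖ * (α/4) := by
      obtain ⟨qq, hqq, hpqq⟩ := transfer x x' hdiff2 p2 hp2
      have h1 := hsepD _ (hmemD 0 le_rfl _ hqq)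
      have h1' : -(f qq) < sep := by simpa using h1
      have h2 : f qq - f p2 ≤ ‖f‖ * (α/4) := by
        have h4 : ‖qq - p2‖ ≤ α/4 := by rw [norm_sub_rev]; exact hpqq
        calc f qq - f p2 = f (qq - p2) := by rw [map_sub]
          _ ≤ |f (qq - p2)| := le_abs_self _
          _ ≤ ‖f‖ * ‖qq - p2‖ := by rw [← Real.norm_eq_abs]; exact f.le_opNorm _
          _ ≤ ‖f‖ * (α/4) := mul_le_mul_of_nonneg_left h4 (norm_nonneg f)
      linarith
    have hsepfw : sep < f z + ‖f‖ * (α/4) + ‖f‖ * δ := by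
      have h1 : f w = f z + f Δz + f (w - (z + Δz)) := by
        rw [map_sub, map_add]; ring
      have h2 : f Δz ≤ ‖f‖ * (α/4) := by
        calc f Δz ≤ |f Δz| := le_abs_self _
          _ ≤ ‖f‖ * ‖Δz‖ := by rw [← Real.norm_eq_abs]; exact f.le_opNorm _
          _ ≤ ‖f‖ * (α/4) := mul_le_mul_of_nonneg_left hΔz (norm_nonneg f)
      have h3 : f (w - (z + Δz)) ≤ ‖f‖ * δ := by
        have h4 : ‖w - (z + Δz)‖ ≤ δ := by rw [← dist_eq_norm]; exact hw
        calc f (w - (z + Δz)) ≤ |f (w - (z + Δz))| := le_abs_self _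
          _ ≤ ‖f‖ * ‖w - (z + Δz)‖ := by rw [← Real.norm_eq_abs]; exact f.le_opNorm _
          _ ≤ ‖f‖ * δ := mul_le_mul_of_nonneg_left h4 (norm_nonneg f)
      linarith [hsepw]
    have hfut1 : f z + t * (‖f‖ - η) ≤ f ut := by
      rw [hutdef, map_add, map_smul, smul_eq_mul]
      have := mul_le_mul_of_nonneg_left hvf.le ht0.le
      linarith
    have hfut2 : f ut = γ * f c - f p2 := by
      rw [← hueq, map_sub, map_smul, smul_eq_mul]
    have hηt : t * η < ‖f‖ * δ / 2 := by
      rw [hηdef]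
      have h5 : t * (‖f‖ * δ / (2 * r)) = ‖f‖ * δ * t / (2 * r) := by ring
      rw [h5, div_lt_div_iff₀ (by linarith) (by norm_num : (0:ℝ) < 2)]
      nlinarith [mul_pos (mul_pos hF hδ0) (sub_pos.mpr htr)]
    have hexp : t * (‖f‖ - η) = t * ‖f‖ - t * η := by ring
    have hteq : t = α + 3 * δ := by rw [htdef, hδdef]; ring
    -- combine everything
    have hfinal : t * ‖f‖ < ‖f‖ * (t/2) + ‖f‖ * (α/2) + ‖f‖ * δ + ‖f‖ * δ / 2 := by
      have hh1 : f z + (t * ‖f‖ - t * η) ≤ f ut := by rw [← hexp]; exact hfut1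
      have hh2 : f ut < ‖f‖ * (t/2) + sep + ‖f‖ * (α/4) := by
        rw [hfut2]; linarith [hγfc, hfp]
      linarith [hh1, hh2, hsepfw, hηt]
    rw [hteq] at hfinal
    nlinarith [hfinal, hF]
  -- Step 5: conclude z + Δz is in the interior of S'
  have hzint : z + Δz ∈ interior S' := by
    rw [mem_interior_iff_mem_nhds, Metric.mem_nhds_iff]
    refine ⟨δ/2, by positivity, ?_⟩
    intro w hw
    set ε := δ / (4 * ‖c'‖) with hεdef
    have hε0 : 0 < ε := by rw [hεdef]; positivity
    have hεc' : ‖ε • c'‖ = δ/4 := by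
      rw [norm_smul, Real.norm_eq_abs, abs_of_pos hε0, hεdef]
      field_simp
    have hwD : w - ε • c' ∈ D := by
      apply hkeyD
      have h1 : dist (w - ε • c') w = δ/4 := by
        rw [dist_eq_norm]
        have : w - ε • c' - w = -(ε • c') := by abel
        rw [this, norm_neg, hεc']
      rw [Metric.mem_ball] at hw
      calc dist (w - ε • c') (z + Δz) ≤ dist (w - ε • c') w + dist w (z + Δz) :=
            dist_triangle _ _ _
        _ ≤ δ/4 + δ/2 := by rw [h1]; linarith
        _ ≤ δ := by linarith
    obtain ⟨a, ⟨β2, hβ20, ha⟩, q2, hq2, heq⟩ := Set.mem_sub.1 hwD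
    subst ha
    have hβ20' : (0:ℝ) ≤ β2 := hβ20
    refine Set.mem_sub.2 ⟨(β2 + ε) • c', ⟨β2 + ε, by linarith, rfl⟩, q2, hq2, ?_⟩
    rw [add_smul]
    calc β2 • c' + ε • c' - q2 = (β2 • c' - q2) + ε • c' := by abel
      _ = (w - ε • c') + ε • c' := by rw [heq]
      _ = w := by abel
  exact hzf.2 hzint
end
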